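/- arXiv:2503.03873 — 4 statements merged into one kernel-verified Lean document; each statement's English description precedes it below -/
import Mathlib

section
/- In SL₂(ℤ), let α = [[1,1],[0,1]] and β = [[1,0],[−4,1]]. Then the congruence subgroup Γ₁(4) = {[[a,b],[c,d]] ∈ SL₂(ℤ) : a ≡ d ≡ 1 (mod 4) and c ≡ 0 (mod 4)} is equal to the subgroup of SL₂(ℤ) generated by α and β. Moreover, if Λ denotes the subgroup of GL₂(ℚ) generated by α and γ = [[0,1],[−4,0]], then a matrix g ∈ SL₂(ℤ) lies in Λ (when viewed as an element of GL₂(ℚ)) if and only if g ∈ Γ₁(4). -/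
open Matrix CongruenceSubgroup
open scoped MatrixGroups

/-- `α = [[1,1],[0,1]]` as an element of `SL₂(ℤ)`. -/
def alphaSL : SL(2, ℤ) := ⟨!![1, 1; 0, 1], by norm_num [Matrix.det_fin_two_of]⟩

/-- `β = [[1,0],[-4,1]]` as an element of `SL₂(ℤ)`. -/
def betaSL : SL(2, ℤ) := ⟨!![1, 0; -4, 1], by norm_num [Matrix.det_fin_two_of]⟩

/-- `α = [[1,1],[0,1]]` as an element of `GL₂(ℚ)`. -/
noncomputable def alphaGL : GL (Fin 2) ℚ :=
  Matrix.GeneralLinearGroup.mkOfDetNeZero !![1, 1; 0, 1] (by norm_num [Matrix.det_fin_two_of])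

/-- `γ = [[0,1],[-4,0]]` as an element of `GL₂(ℚ)`. -/
noncomputable def gammaGL : GL (Fin 2) ℚ :=
  Matrix.GeneralLinearGroup.mkOfDetNeZero !![0, 1; -4, 0] (by norm_num [Matrix.det_fin_two_of])

/-!
For `Γ₁(4)` we run a Euclidean descent on `|c|`. Left multiplication by `αⁿ` replaces `a` by
`a + n c`, which can be brought to `|a| ≤ |c| / 2`; since `a` is odd and `4 ∣ c` this is strict.
Left multiplication by `βᵐ` then replaces `c = 4k` by `4 (k + m a)`, which can be brought to
`|c| ≤ 2 |a| < |c|`. At `c = 0` the matrix is a power of `α`.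

For `Λ`, conjugation by `γ` swaps `α` and `β` (as `γ² = -4` is central), so `γ` normalizes
`⟨α, β⟩` and `Λ = ⟨α, β⟩ ⟨γ⟩`. On `⟨α, β⟩` the determinant is `1`, while `det γ = 4` has
infinite order, so an element of `Λ` of determinant `1` lies in `⟨α, β⟩`.
-/

open ModularGroup Matrix.SpecialLinearGroup

theorem Subgroup.mem_of_mem_sup_zpowers_of_map_eq_one {G M : Type*} [Group G] [Group M]
    {H : Subgroup G} {y x : G} (f : G →* M) (hy : y ∈ normalizer (H : Set G))
    (hHf : H ≤ f.ker) (hfy : ¬IsOfFinOrder (f y)) (hx : x ∈ H ⊔ zpowers y) (hfx : f x = 1) :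
    x ∈ H := by
  rw [← SetLike.mem_coe, coe_mul_of_right_le_normalizer_left H _ (zpowers_le.mpr hy)] at hx
  obtain ⟨h, hh, _, ⟨k, rfl⟩, rfl⟩ := hx
  dsimp only at hfx ⊢
  have hk : f y ^ k = f y ^ (0 : ℤ) := by
    rw [map_mul, hHf hh, one_mul, map_zpow] at hfx
    rw [hfx, zpow_zero]
  rw [injective_zpow_iff_not_isOfFinOrder.mpr hfy hk, zpow_zero, mul_one]
  exact hh

lemma alphaSL_eq_T : alphaSL = T := by ext i j; fin_cases i <;> fin_cases j <;> rfl

lemma betaSL_eq_conj_T_zpow : betaSL = S * T ^ (4 : ℤ) * S⁻¹ := by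
  apply Matrix.SpecialLinearGroup.ext
  simp only [Matrix.SpecialLinearGroup.coe_mul, Matrix.SpecialLinearGroup.coe_inv, coe_T_zpow,
    coe_S]
  intro i j
  fin_cases i <;> fin_cases j <;>
    simp [betaSL, Matrix.mul_apply, Fin.sum_univ_two, adjugate_fin_two]

lemma coe_betaSL_zpow (m : ℤ) : ↑(betaSL ^ m) = !![1, 0; -4 * m, 1] := by
  rw [betaSL_eq_conj_T_zpow, conj_zpow, ← _root_.zpow_mul]
  simp [coe_T_zpow, adjugate_fin_two]

lemma closure_alphaSL_betaSL_le_Gamma1_four : Subgroup.closure {alphaSL, betaSL} ≤ Gamma1 4 := by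
  rw [Subgroup.closure_le]
  rintro x (rfl | rfl) <;> rw [SetLike.mem_coe, Gamma1_mem] <;> simp [alphaSL, betaSL]; decide

lemma emod_four_eq_one_and_four_dvd_of_mem_Gamma1_four {g : SL(2, ℤ)} (hg : g ∈ Gamma1 4) :
    g 0 0 % 4 = 1 ∧ 4 ∣ g 1 0 := by
  rw [Gamma1_mem] at hg
  exact ⟨(ZMod.intCast_eq_intCast_iff' (g 0 0) 1 4).mp (by simpa using hg.1),
    (ZMod.intCast_zmod_eq_zero_iff_dvd _ 4).mp hg.2.2⟩

lemma eq_T_zpow_of_mem_Gamma1_four {g : SL(2, ℤ)} (hg : g ∈ Gamma1 4) (hc : g 1 0 = 0) :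
    g = T ^ g 0 1 := by
  have had : g 0 0 * g 1 1 = 1 := by
    have := g.det_coe; rw [det_fin_two, hc] at this; linarith
  have ha := (emod_four_eq_one_and_four_dvd_of_mem_Gamma1_four hg).1
  obtain ⟨ha1, hd1⟩ : g 0 0 = 1 ∧ g 1 1 = 1 := by
    rcases Int.eq_one_or_neg_one_of_mul_eq_one' had with h | ⟨h, -⟩
    · exact h
    · rw [h] at ha; norm_num at ha
  ext i j; fin_cases i <;> fin_cases j <;> simp [ha1, hd1, hc, coe_T_zpow]

lemma exists_two_mul_natAbs_add_mul_le (a : ℤ) {c : ℤ} (hc : c ≠ 0) :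
    ∃ n : ℤ, 2 * (a + n * c).natAbs ≤ c.natAbs := by
  have hm : 0 < c.natAbs := Int.natAbs_pos.mpr hc
  obtain ⟨n, hn⟩ : c ∣ a.bmod c.natAbs - a :=
    Int.natAbs_dvd.mp (Int.ModEq.dvd (Int.bmod_emod (x := a)).symm)
  refine ⟨n, ?_⟩
  have h₁ := Int.le_bmod (x := a) hm
  have h₂ := Int.bmod_lt (x := a) hm
  rw [show a + n * c = a.bmod c.natAbs by linarith]
  omega

lemma betaSL_zpow_mul_T_zpow_mul_apply_one_zero (m n : ℤ) (g : SL(2, ℤ)) :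
    (betaSL ^ m * (T ^ n * g)) 1 0 = g 1 0 - 4 * m * (g 0 0 + n * g 1 0) := by
  simp [coe_betaSL_zpow, coe_T_zpow, Matrix.mul_apply, Matrix.vecMul, dotProduct,
    Fin.sum_univ_two]
  ring

lemma exists_natAbs_betaSL_zpow_mul_T_zpow_mul_lt {g : SL(2, ℤ)} (hg : g ∈ Gamma1 4)
    (hc : g 1 0 ≠ 0) : ∃ m n : ℤ, ((betaSL ^ m * (T ^ n * g)) 1 0).natAbs < (g 1 0).natAbs := by
  obtain ⟨ha, k, hk⟩ := emod_four_eq_one_and_four_dvd_of_mem_Gamma1_four hg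
  obtain ⟨n, hn⟩ := exists_two_mul_natAbs_add_mul_le (g 0 0) hc
  set a := g 0 0 + n * g 1 0 with ha_def
  have ha4 : a % 4 = 1 := by
    rw [show a = g 0 0 + 4 * (n * k) by rw [ha_def, hk]; ring]; omega
  have ha0 : a ≠ 0 := by omega
  obtain ⟨m, hm⟩ := exists_two_mul_natAbs_add_mul_le k ha0
  refine ⟨-m, n, ?_⟩
  rw [betaSL_zpow_mul_T_zpow_mul_apply_one_zero, ← ha_def,
    show g 1 0 - 4 * -m * a = 4 * (k + m * a) by rw [hk]; ring]
  rw [hk] at hn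
  omega

lemma Gamma1_four_le_closure_alphaSL_betaSL : Gamma1 4 ≤ Subgroup.closure {alphaSL, betaSL} := by
  have hT : ∀ n : ℤ, T ^ n ∈ Subgroup.closure {alphaSL, betaSL} := fun n =>
    zpow_mem (Subgroup.subset_closure (by simp [alphaSL_eq_T])) n
  have hβ : ∀ m : ℤ, betaSL ^ m ∈ Subgroup.closure {alphaSL, betaSL} := fun m =>
    zpow_mem (Subgroup.subset_closure (by simp)) m
  intro g hg
  induction h : (g 1 0).natAbs using Nat.strong_induction_on generalizing g with
  | _ N ih =>
    by_cases hc : g 1 0 = 0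
    · rw [eq_T_zpow_of_mem_Gamma1_four hg hc]
      exact hT _
    obtain ⟨m, n, hlt⟩ := exists_natAbs_betaSL_zpow_mul_T_zpow_mul_lt hg hc
    have hmem : betaSL ^ m * (T ^ n * g) ∈ Gamma1 4 :=
      mul_mem (closure_alphaSL_betaSL_le_Gamma1_four (hβ m))
        (mul_mem (closure_alphaSL_betaSL_le_Gamma1_four (hT n)) hg)
    have hrec := ih _ (h ▸ hlt) hmem rfl
    rw [show g = (T ^ n)⁻¹ * ((betaSL ^ m)⁻¹ * (betaSL ^ m * (T ^ n * g))) by group]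
    exact mul_mem (inv_mem (hT n)) (mul_mem (inv_mem (hβ m)) hrec)

theorem closure_alphaSL_betaSL_eq_Gamma1_four : Subgroup.closure {alphaSL, betaSL} = Gamma1 4 :=
  le_antisymm closure_alphaSL_betaSL_le_Gamma1_four Gamma1_four_le_closure_alphaSL_betaSL

lemma mapGL_alphaSL : mapGL ℚ alphaSL = alphaGL := by
  ext i j; fin_cases i <;> fin_cases j <;> rfl

lemma coe_mapGL_betaSL : (mapGL ℚ betaSL : Matrix (Fin 2) (Fin 2) ℚ) = !![1, 0; -4, 1] := by
  ext i j; fin_cases i <;> fin_cases j <;> rfl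

lemma gammaGL_mul_alphaGL : gammaGL * alphaGL = mapGL ℚ betaSL * gammaGL := by
  ext i j
  simp only [Units.val_mul, coe_mapGL_betaSL, alphaGL, gammaGL,
    GeneralLinearGroup.val_mkOfDetNeZero]
  fin_cases i <;> fin_cases j <;> simp

lemma gammaGL_mul_mapGL_betaSL : gammaGL * mapGL ℚ betaSL = alphaGL * gammaGL := by
  ext i j
  simp only [Units.val_mul, coe_mapGL_betaSL, alphaGL, gammaGL,
    GeneralLinearGroup.val_mkOfDetNeZero]
  fin_cases i <;> fin_cases j <;> simp

lemma not_isOfFinOrder_det_gammaGL : ¬IsOfFinOrder (GeneralLinearGroup.det gammaGL) := by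
  rw [isOfFinOrder_iff_pow_eq_one]
  rintro ⟨n, hn, h⟩
  have h4 : (4 : ℚ) ^ n = 1 := by
    simpa [gammaGL, Matrix.det_fin_two_of, Units.ext_iff] using h
  exact (one_lt_pow₀ (by norm_num : (1 : ℚ) < 4) hn.ne').ne' h4

lemma map_closure_alphaSL_betaSL :
    (Subgroup.closure {alphaSL, betaSL}).map (mapGL ℚ) =
      Subgroup.closure {alphaGL, mapGL ℚ betaSL} := by
  rw [MonoidHom.map_closure, Set.image_pair, mapGL_alphaSL]

lemma gammaGL_mem_normalizer :
    gammaGL ∈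
      Subgroup.normalizer (Subgroup.closure {alphaGL, mapGL ℚ betaSL} : Set (GL (Fin 2) ℚ)) := by
  rw [Subgroup.mem_normalizer_iff_map_conj_eq, MonoidHom.map_closure, Set.image_pair]
  simp only [MonoidHom.coe_coe, MulAut.conj_apply]
  rw [mul_inv_eq_of_eq_mul gammaGL_mul_alphaGL, mul_inv_eq_of_eq_mul gammaGL_mul_mapGL_betaSL,
    Set.pair_comm]

lemma closure_alphaGL_gammaGL :
    Subgroup.closure {alphaGL, gammaGL} =
      Subgroup.closure {alphaGL, mapGL ℚ betaSL} ⊔ Subgroup.zpowers gammaGL := by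
  apply le_antisymm
  · rw [Subgroup.closure_le, Set.insert_subset_iff, Set.singleton_subset_iff]
    exact ⟨Subgroup.mem_sup_left (Subgroup.subset_closure (by simp)),
      Subgroup.mem_sup_right (Subgroup.mem_zpowers _)⟩
  · have hα : alphaGL ∈ Subgroup.closure {alphaGL, gammaGL} := Subgroup.subset_closure (by simp)
    have hγ : gammaGL ∈ Subgroup.closure {alphaGL, gammaGL} := Subgroup.subset_closure (by simp)
    refine sup_le ?_ (Subgroup.zpowers_le.mpr hγ)
    rw [Subgroup.closure_le, Set.insert_subset_iff, Set.singleton_subset_iff,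
      ← mul_inv_eq_of_eq_mul gammaGL_mul_alphaGL]
    exact ⟨hα, mul_mem (mul_mem hγ hα) (inv_mem hγ)⟩

lemma mapGL_mem_closure_alphaGL_gammaGL_iff (g : SL(2, ℤ)) :
    mapGL ℚ g ∈ Subgroup.closure {alphaGL, gammaGL} ↔
      g ∈ Subgroup.closure {alphaSL, betaSL} := by
  rw [closure_alphaGL_gammaGL]
  constructor
  · intro h
    have hdet : Subgroup.closure {alphaGL, mapGL ℚ betaSL} ≤ (GeneralLinearGroup.det).ker := by
      rw [← map_closure_alphaSL_betaSL]
      rintro _ ⟨s, -, rfl⟩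
      exact det_mapGL s
    have hmem := Subgroup.mem_of_mem_sup_zpowers_of_map_eq_one GeneralLinearGroup.det
      gammaGL_mem_normalizer hdet not_isOfFinOrder_det_gammaGL h (det_mapGL g)
    rwa [← map_closure_alphaSL_betaSL, Subgroup.mem_map_iff_mem mapGL_injective] at hmem
  · intro h
    rw [← map_closure_alphaSL_betaSL]
    exact Subgroup.mem_sup_left (Subgroup.mem_map_of_mem _ h)

/-- `Γ₁(4)` is the subgroup of `SL₂(ℤ)` generated by `α` and `β`; moreover, an
element `g` of `SL₂(ℤ)`, viewed in `GL₂(ℚ)`, lies in the subgroup `Λ` generated by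
`α` and `γ` if and only if `g ∈ Γ₁(4)`. -/
theorem gamma1_four_eq_closure (g : SL(2, ℤ)) :
    (g ∈ Subgroup.closure {alphaSL, betaSL} ↔ g ∈ Gamma1 4) ∧
    ((∃ x ∈ Subgroup.closure {alphaGL, gammaGL},
        (x : Matrix (Fin 2) (Fin 2) ℚ) =
          ((g : Matrix (Fin 2) (Fin 2) ℤ)).map (Int.cast : ℤ → ℚ)) ↔
      g ∈ Gamma1 4) := by
  have hclosure : g ∈ Subgroup.closure {alphaSL, betaSL} ↔ g ∈ Gamma1 4 := by
    rw [closure_alphaSL_betaSL_eq_Gamma1_four]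
  refine ⟨hclosure, ?_⟩
  rw [← hclosure, ← mapGL_mem_closure_alphaGL_gammaGL_iff]
  constructor
  · rintro ⟨x, hx, hxg⟩
    rwa [show x = mapGL ℚ g from Units.ext hxg] at hx
  · exact fun h => ⟨_, h, rfl⟩
end

section
/- Let d ≥ 1 be an even integer, p an odd prime, n ≥ 1 a natural number, and v = ord_p(n) the p-adic valuation of n. Then for every integer h ≥ 1: A_d(p^h, n) = ((p−1)/p) · (ε_p^d · p^{1−d/2})^h if 1 ≤ h ≤ v; A_d(p^h, n) = −(ε_p^d · p^{1−d/2})^{v+1} · p^{−1} if h = v+1; and A_d(p^h, n) = 0 if h > v+1. -/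
open Complex Real Finset

/-- The Gauss sum `S(q,a) = Σ_{t=1}^{q} e^{2πi a t²/q}`. -/
noncomputable def gaussSumS (q : ℕ) (a : ℕ) : ℂ :=
  ∑ t ∈ Finset.Icc 1 q, Complex.exp (2 * π * I * (a : ℂ) * (t : ℂ) ^ 2 / (q : ℂ))

/-- `A_d(q,n) = Σ_{1 ≤ a ≤ q, gcd(a,q)=1} (q⁻¹ S(q,a))^d e^{-2πi n a/q}`. -/
noncomputable def Acoef (d q n : ℕ) : ℂ :=
  ∑ a ∈ (Finset.Icc 1 q).filter fun a => Nat.gcd a q = 1,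
    ((q : ℂ)⁻¹ * gaussSumS q a) ^ d * Complex.exp (-(2 * π * I) * (n : ℂ) * (a : ℂ) / (q : ℂ))

/-- `ε_p` for an odd prime `p`: `1` if `p ≡ 1 (mod 4)`, `i` if `p ≡ 3 (mod 4)`. -/
noncomputable def epsP (p : ℕ) : ℂ := if p % 4 = 1 then 1 else Complex.I

/-!
For `p ∤ a` the Gauss sum satisfies `S(p^h, a)² = ε_p^{2h} p^h`: for `h = 1` it is the square of
the quadratic Gauss sum over `𝔽_p`, and `S(p^{h+2}, a) = p S(p^h, a)`. As `d` is even, every term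
of `A_d(p^h, n)` therefore carries the same factor `(ε_p² / p)^{hd/2}`, and what remains is the
Ramanujan sum `c_{p^h}(n) = p^h [p^h ∣ n] - p^{h-1} [p^{h-1} ∣ n]`.
-/

noncomputable def expFrac (q : ℕ) (x : ℤ) : ℂ := exp (2 * π * I * x / q)

lemma expFrac_eq_stdAddChar {q : ℕ} [NeZero q] (x : ℤ) :
    expFrac q x = ZMod.stdAddChar (x : ZMod q) :=
  (ZMod.stdAddChar_coe x).symm

lemma expFrac_natCast_mul (q : ℕ) (x : ℤ) : expFrac q (q * x) = 1 := by
  rcases eq_or_ne q 0 with rfl | hq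
  · simp [expFrac]
  · have : NeZero q := ⟨hq⟩
    simp [expFrac_eq_stdAddChar]

lemma expFrac_add (q : ℕ) (x y : ℤ) : expFrac q (x + y) = expFrac q x * expFrac q y := by
  simp only [expFrac, ← Complex.exp_add]
  congr 1
  push_cast
  ring

lemma expFrac_mul_left {A : ℕ} (hA : A ≠ 0) (B : ℕ) (c : ℤ) :
    expFrac (A * B) (A * c) = expFrac B c := by
  rcases eq_or_ne B 0 with rfl | hB
  · simp [expFrac]
  · simp only [expFrac]
    congr 1
    push_cast
    field_simp

lemma sum_range_eq_sum_zmod {M : Type*} [AddCommMonoid M] (q : ℕ) [NeZero q] (g : ZMod q → M) :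
    ∑ t ∈ range q, g t = ∑ x : ZMod q, g x := by
  obtain ⟨n, rfl⟩ : ∃ n, q = n + 1 := Nat.exists_eq_succ_of_ne_zero (NeZero.ne q)
  rw [← Fin.sum_univ_eq_sum_range (fun t => g t)]
  exact Fintype.sum_congr _ _ fun x => congrArg g (ZMod.natCast_zmod_val (n := n + 1) x)

lemma sum_range_expFrac_mul (q : ℕ) [NeZero q] (c : ℤ) :
    ∑ t ∈ range q, expFrac q (c * t) = if (q : ℤ) ∣ c then (q : ℂ) else 0 := by
  simp_rw [expFrac_eq_stdAddChar, Int.cast_mul, Int.cast_natCast, mul_comm (c : ZMod q)]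
  rw [sum_range_eq_sum_zmod q (fun x => ZMod.stdAddChar (x * (c : ZMod q))),
    AddChar.sum_mulShift _ (ZMod.isPrimitive_stdAddChar q), ZMod.card]
  simp only [ZMod.intCast_zmod_eq_zero_iff_dvd]
  split_ifs <;> simp

lemma sum_range_mul {M : Type*} [AddCommMonoid M] (A B : ℕ) (f : ℕ → M) :
    ∑ t ∈ range (A * B), f t = ∑ v ∈ range B, ∑ u ∈ range A, f (A * v + u) := by
  induction B with
  | zero => simp
  | succ B ih => rw [Nat.mul_succ, sum_range_add, ih, sum_range_succ]

lemma filter_dvd_range_mul {k : ℕ} (hk : k ≠ 0) (B : ℕ) :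
    (range (k * B)).filter (k ∣ ·) = (range B).image (k * ·) := by
  ext t
  simp only [mem_filter, mem_range, mem_image]
  constructor
  · rintro ⟨ht, w, rfl⟩
    exact ⟨w, Nat.lt_of_mul_lt_mul_left ht, rfl⟩
  · rintro ⟨w, hw, rfl⟩
    exact ⟨Nat.mul_lt_mul_of_pos_left hw (Nat.pos_of_ne_zero hk), dvd_mul_right k w⟩

lemma sum_filter_dvd_range_mul {M : Type*} [AddCommMonoid M] {k : ℕ} (hk : k ≠ 0) (B : ℕ)
    (f : ℕ → M) :
    ∑ t ∈ (range (k * B)).filter (k ∣ ·), f t = ∑ w ∈ range B, f (k * w) := by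
  rw [filter_dvd_range_mul hk, sum_image fun _ _ _ _ h => Nat.eq_of_mul_eq_mul_left
    (Nat.pos_of_ne_zero hk) h]

lemma sum_Icc_one_eq_sum_range {M : Type*} [AddCommMonoid M] {q : ℕ} (f : ℕ → M)
    (hf : f q = f 0) : ∑ t ∈ Icc 1 q, f t = ∑ t ∈ range q, f t := by
  have hshift : ∑ t ∈ Icc 1 q, f t = ∑ t ∈ range q, f (t + 1) := by
    rw [range_eq_Ico, sum_Ico_add' f 0 q 1]
    rfl
  rw [hshift]
  cases q with
  | zero => simp
  | succ n => rw [sum_range_succ, hf, sum_range_succ' f]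

noncomputable def quadGaussSum (q : ℕ) (a : ℤ) : ℂ := ∑ t ∈ range q, expFrac q (a * t ^ 2)

lemma gaussSumS_eq_quadGaussSum (q a : ℕ) : gaussSumS q a = quadGaussSum q a := by
  rw [gaussSumS, quadGaussSum, ← sum_Icc_one_eq_sum_range]
  · refine sum_congr rfl fun t _ => ?_
    simp only [expFrac]
    push_cast
    ring_nf
  · push_cast
    rw [show (a : ℤ) * q ^ 2 = q * (a * q) by ring, expFrac_natCast_mul]
    simp [expFrac]

lemma natCast_dvd_two_mul_mul_iff {p : ℕ} (hp : p.Prime) (hp2 : p ≠ 2) {a : ℤ}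
    (ha : ¬ (p : ℤ) ∣ a) (u : ℤ) : (p : ℤ) ∣ 2 * a * u ↔ (p : ℤ) ∣ u := by
  have hpZ : Prime (p : ℤ) := Nat.prime_iff_prime_int.mp hp
  have h2 : ¬ (p : ℤ) ∣ 2 := fun h =>
    hp2 ((Nat.prime_dvd_prime_iff_eq hp Nat.prime_two).mp (by exact_mod_cast h))
  simp [hpZ.dvd_mul, h2, ha]

/-- Writing `t = p ^ (h + 1) * v + u`, the term `a t²` is `a u² + p ^ (h + 1) (2 a u v)`
modulo `p ^ (h + 2)`, so summing over `v` kills every `u` prime to `p`. -/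
lemma quadGaussSum_prime_pow_add_two {p : ℕ} (hp : p.Prime) (hp2 : p ≠ 2) {a : ℤ}
    (ha : ¬ (p : ℤ) ∣ a) (h : ℕ) :
    quadGaussSum (p ^ (h + 2)) a = p * quadGaussSum (p ^ h) a := by
  have : NeZero p := ⟨hp.ne_zero⟩
  have hsplit (u v : ℕ) : expFrac (p ^ (h + 2)) (a * ((p ^ (h + 1) * v + u : ℕ) : ℤ) ^ 2)
      = expFrac (p ^ (h + 2)) (a * u ^ 2) * expFrac p (2 * a * u * v) := by
    have hexpand : a * ((p ^ (h + 1) * v + u : ℕ) : ℤ) ^ 2 = a * u ^ 2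
        + ((p ^ (h + 1) : ℕ) : ℤ) * (2 * a * u * v)
        + ((p ^ (h + 2) : ℕ) : ℤ) * (p ^ h * a * v ^ 2) := by
      push_cast; ring
    rw [hexpand, expFrac_add, expFrac_natCast_mul, mul_one, expFrac_add, pow_succ p (h + 1),
      expFrac_mul_left (pow_ne_zero _ hp.ne_zero)]
  have hinner (u : ℕ) :
      ∑ v ∈ range p, expFrac p (2 * a * u * v) = if p ∣ u then (p : ℂ) else 0 := by
    simp only [sum_range_expFrac_mul, natCast_dvd_two_mul_mul_iff hp hp2 ha,
      Int.natCast_dvd_natCast]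
  calc quadGaussSum (p ^ (h + 2)) a
      = ∑ u ∈ range (p ^ (h + 1)), ∑ v ∈ range p,
          expFrac (p ^ (h + 2)) (a * u ^ 2) * expFrac p (2 * a * u * v) := by
        rw [quadGaussSum, pow_succ p (h + 1), sum_range_mul, sum_comm, ← pow_succ]
        simp_rw [hsplit]
    _ = p * ∑ u ∈ (range (p ^ (h + 1))).filter (p ∣ ·), expFrac (p ^ (h + 2)) (a * u ^ 2) := by
        simp_rw [← mul_sum, hinner, mul_ite, mul_zero, sum_ite, sum_const_zero, add_zero,
          ← sum_mul, mul_comm]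
    _ = p * quadGaussSum (p ^ h) a := by
        rw [pow_succ', sum_filter_dvd_range_mul hp.ne_zero, quadGaussSum]
        congr 1
        refine sum_congr rfl fun w _ => ?_
        rw [show p ^ (h + 2) = p ^ 2 * p ^ h by ring,
          show a * ((p * w : ℕ) : ℤ) ^ 2 = ((p ^ 2 : ℕ) : ℤ) * (a * w ^ 2) by push_cast; ring,
          expFrac_mul_left (pow_ne_zero 2 hp.ne_zero)]

theorem sum_addChar_mul_sq_sq {F R : Type*} [Field F] [Fintype F] [DecidableEq F] [CommRing R]
    [IsDomain R] [CharZero R] (hF : ringChar F ≠ 2) {ψ : AddChar F R} (hψ : ψ.IsPrimitive)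
    {a : F} (ha : a ≠ 0) :
    (∑ x, ψ (a * x ^ 2)) ^ 2 = quadraticChar F (-1) * Fintype.card F := by
  set χ := (quadraticChar F).ringHomComp (Int.castRingHom R)
  have hχ : χ ≠ 1 := (MulChar.ringHomComp_ne_one_iff Int.cast_injective).mpr
    (quadraticChar_ne_one hF)
  have hχa : χ a ^ 2 = 1 := by
    simp only [χ, MulChar.ringHomComp_apply, eq_intCast]
    rw [← Int.cast_pow, quadraticChar_sq_one ha, Int.cast_one]
  -- counting square roots, `∑ₓ ψ (a x²) = ∑_b (1 + χ b) ψ (a b)`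
  have hsum : ∑ x, ψ (a * x ^ 2) = gaussSum χ (ψ.mulShift a) := by
    rw [← sum_fiberwise' univ (fun x : F => x ^ 2) (fun b => ψ (a * b)), gaussSum]
    have hzero : ∑ b, ψ.mulShift a b = 0 :=
      AddChar.sum_eq_zero_iff_ne_zero.mpr (hψ ha)
    rw [← add_zero (∑ b, χ b * _), ← hzero, ← sum_add_distrib]
    refine sum_congr rfl fun b _ => ?_
    have hcard := quadraticChar_card_sqrts hF b
    rw [Set.toFinset_ofPred] at hcard
    simp only [sum_const, nsmul_eq_mul, AddChar.mulShift_apply, χ, MulChar.ringHomComp_apply,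
      eq_intCast]
    rw [show ((#{x | x ^ 2 = b} : ℕ) : R) = ((#{x | x ^ 2 = b} : ℕ) : ℤ) by norm_cast, hcard]
    push_cast
    ring
  have hG := gaussSum_mulShift χ ψ (Units.mk0 a ha)
  rw [Units.val_mk0] at hG
  rw [hsum, ← one_mul (gaussSum χ _ ^ 2), ← hχa, ← mul_pow, hG,
    gaussSum_sq hχ ((quadraticChar_isQuadratic F).comp _) hψ]
  simp [χ]

lemma epsP_sq {p : ℕ} (hp : p % 2 = 1) : epsP p ^ 2 = ZMod.χ₄ p := by
  rw [ZMod.χ₄_nat_eq_if_mod_four, if_neg (by omega), epsP]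
  rcases (by omega : p % 4 = 1 ∨ p % 4 = 3) with h | h <;> simp [h]

lemma epsP_pow_four (p : ℕ) : epsP p ^ 4 = 1 := by
  rw [epsP]
  split_ifs
  · exact one_pow 4
  · exact Complex.I_pow_four

lemma quadGaussSum_prime_sq {p : ℕ} (hp : p.Prime) (hp2 : p ≠ 2) {a : ℤ} (ha : ¬ (p : ℤ) ∣ a) :
    quadGaussSum p a ^ 2 = epsP p ^ 2 * p := by
  have : Fact p.Prime := ⟨hp⟩
  have hF : ringChar (ZMod p) ≠ 2 := by rwa [ZMod.ringChar_zmod_n]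
  have hS : quadGaussSum p a = ∑ x : ZMod p, ZMod.stdAddChar ((a : ZMod p) * x ^ 2) := by
    rw [quadGaussSum, ← sum_range_eq_sum_zmod p]
    simp_rw [expFrac_eq_stdAddChar]
    push_cast
    rfl
  rw [hS, sum_addChar_mul_sq_sq hF (ZMod.isPrimitive_stdAddChar p)
    (by rwa [Ne, ZMod.intCast_zmod_eq_zero_iff_dvd]), quadraticChar_neg_one hF, ZMod.card,
    epsP_sq (Nat.odd_iff.mp (hp.odd_of_ne_two hp2))]

lemma quadGaussSum_prime_pow_sq {p : ℕ} (hp : p.Prime) (hp2 : p ≠ 2) {a : ℤ}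
    (ha : ¬ (p : ℤ) ∣ a) (h : ℕ) :
    quadGaussSum (p ^ h) a ^ 2 = epsP p ^ (2 * h) * p ^ h := by
  induction h using Nat.twoStepInduction with
  | zero => simp [quadGaussSum, expFrac]
  | one => simpa using quadGaussSum_prime_sq hp hp2 ha
  | more h ih _ =>
    rw [quadGaussSum_prime_pow_add_two hp hp2 ha, mul_pow, ih,
      show 2 * (h + 2) = 2 * h + 4 by ring, pow_add, epsP_pow_four]
    ring

lemma sum_filter_not_dvd_expFrac {p : ℕ} (hp : p.Prime) (k : ℕ) (c : ℤ) :
    ∑ t ∈ (range (p ^ (k + 1))).filter (¬ p ∣ ·), expFrac (p ^ (k + 1)) (c * t)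
      = (if ((p ^ (k + 1) : ℕ) : ℤ) ∣ c then ((p ^ (k + 1) : ℕ) : ℂ) else 0)
        - (if ((p ^ k : ℕ) : ℤ) ∣ c then ((p ^ k : ℕ) : ℂ) else 0) := by
  have : NeZero p := ⟨hp.ne_zero⟩
  have hmultiples : ∑ t ∈ (range (p ^ (k + 1))).filter (p ∣ ·), expFrac (p ^ (k + 1)) (c * t)
      = ∑ w ∈ range (p ^ k), expFrac (p ^ k) (c * w) := by
    rw [pow_succ', sum_filter_dvd_range_mul hp.ne_zero]
    refine sum_congr rfl fun w _ => ?_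
    rw [show c * ((p * w : ℕ) : ℤ) = p * (c * w) by push_cast; ring, expFrac_mul_left hp.ne_zero]
  rw [← sum_range_expFrac_mul, ← sum_range_expFrac_mul, ← hmultiples, eq_sub_iff_add_eq,
    sum_filter_not_add_sum_filter]

lemma filter_coprime_Icc_prime_pow {p : ℕ} (hp : p.Prime) (k : ℕ) :
    (Icc 1 (p ^ (k + 1))).filter (fun a => Nat.gcd a (p ^ (k + 1)) = 1)
      = (range (p ^ (k + 1))).filter (¬ p ∣ ·) := by
  ext a
  simp only [mem_filter, mem_Icc, mem_range, Nat.coprime_pow_right_iff k.succ_pos,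
    Nat.coprime_comm.trans hp.coprime_iff_not_dvd]
  constructor
  · rintro ⟨⟨-, hle⟩, hpa⟩
    refine ⟨lt_of_le_of_ne hle ?_, hpa⟩
    rintro rfl
    exact hpa (dvd_pow_self p k.succ_ne_zero)
  · rintro ⟨hlt, hpa⟩
    refine ⟨⟨Nat.pos_of_ne_zero ?_, hlt.le⟩, hpa⟩
    rintro rfl
    exact hpa (dvd_zero p)

lemma Acoef_prime_pow {p : ℕ} (hp : p.Prime) (hp2 : p ≠ 2) (m n k : ℕ) :
    Acoef (2 * m) (p ^ (k + 1)) n = (epsP p ^ 2 / p) ^ ((k + 1) * m) *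
      ∑ a ∈ (range (p ^ (k + 1))).filter (¬ p ∣ ·), expFrac (p ^ (k + 1)) (-n * a) := by
  rw [Acoef, filter_coprime_Icc_prime_pow hp, mul_sum]
  refine sum_congr rfl fun a ha => ?_
  have hpa : ¬ (p : ℤ) ∣ a := by
    simpa [Int.natCast_dvd_natCast] using (mem_filter.mp ha).2
  have hsq : (((p ^ (k + 1) : ℕ) : ℂ)⁻¹ * gaussSumS (p ^ (k + 1)) a) ^ 2
      = (epsP p ^ 2 / p) ^ (k + 1) := by
    have hp0 : (p : ℂ) ≠ 0 := Nat.cast_ne_zero.mpr hp.ne_zero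
    rw [mul_pow, gaussSumS_eq_quadGaussSum, quadGaussSum_prime_pow_sq hp hp2 hpa]
    rw [pow_mul, div_pow]
    push_cast
    field_simp
  rw [pow_mul, hsq, ← pow_mul, expFrac]
  congr 3
  push_cast
  ring

theorem Acoef_prime_pow_even_general (d p n : ℕ) (hdeven : Even d)
    (hp : p.Prime) (hpodd : Odd p) (hn : 1 ≤ n) (h : ℕ) (hh : 1 ≤ h) :
    (h ≤ padicValNat p n →
      Acoef d (p ^ h) n =
        (((p : ℂ) - 1) / (p : ℂ)) * (epsP p ^ d * (p : ℂ) ^ (1 - (d : ℤ) / 2)) ^ h) ∧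
    (h = padicValNat p n + 1 →
      Acoef d (p ^ h) n =
        -((epsP p ^ d * (p : ℂ) ^ (1 - (d : ℤ) / 2)) ^ (padicValNat p n + 1)) * (p : ℂ)⁻¹) ∧
    (padicValNat p n + 1 < h → Acoef d (p ^ h) n = 0) := by
  have : Fact p.Prime := ⟨hp⟩
  have hp2 : p ≠ 2 := by
    rintro rfl
    exact Nat.not_even_iff_odd.mpr hpodd even_two
  have hp0 : (p : ℂ) ≠ 0 := Nat.cast_ne_zero.mpr hp.ne_zero
  obtain ⟨m, rfl⟩ : ∃ m, d = 2 * m := hdeven.exists_two_nsmul d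
  obtain ⟨k, rfl⟩ : ∃ k, h = k + 1 := ⟨h - 1, by omega⟩
  have hc : epsP p ^ (2 * m) * (p : ℂ) ^ (1 - ((2 * m : ℕ) : ℤ) / 2)
      = p * (epsP p ^ 2 / p) ^ m := by
    rw [show (1 : ℤ) - ((2 * m : ℕ) : ℤ) / 2 = 1 - m by omega, zpow_sub₀ hp0, zpow_one,
      zpow_natCast, div_pow, pow_mul]
    field_simp
  have hdvd (j : ℕ) : ((p ^ j : ℕ) : ℤ) ∣ -(n : ℤ) ↔ j ≤ padicValNat p n := by
    rw [Int.dvd_neg, Int.natCast_dvd_natCast, padicValNat_dvd_iff_le (by omega)]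
  rw [Acoef_prime_pow hp hp2, sum_filter_not_dvd_expFrac hp, hc]
  simp only [hdvd]
  refine ⟨fun hv => ?_, fun hv => ?_, fun hv => ?_⟩
  · rw [if_pos hv, if_pos (by omega)]
    push_cast
    field_simp
    ring
  · have hk : k = padicValNat p n := by omega
    rw [if_neg (by omega), if_pos (by omega), ← hk]
    push_cast
    field_simp
    ring
  · rw [if_neg (by omega), if_neg (by omega)]
    ring

/-- Explicit values of `A_d(p^h, n)` for even `d`, odd prime `p` and `n ≥ 1`,
in terms of `v = ord_p(n)`. -/
theorem Acoef_prime_pow_even (d p n : ℕ) (hd : 1 ≤ d) (hdeven : Even d)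
    (hp : p.Prime) (hpodd : Odd p) (hn : 1 ≤ n) (h : ℕ) (hh : 1 ≤ h) :
    (h ≤ padicValNat p n →
      Acoef d (p ^ h) n =
        (((p : ℂ) - 1) / (p : ℂ)) * (epsP p ^ d * (p : ℂ) ^ (1 - (d : ℤ) / 2)) ^ h) ∧
    (h = padicValNat p n + 1 →
      Acoef d (p ^ h) n =
        -((epsP p ^ d * (p : ℂ) ^ (1 - (d : ℤ) / 2)) ^ (padicValNat p n + 1)) * (p : ℂ)⁻¹) ∧
    (padicValNat p n + 1 < h → Acoef d (p ^ h) n = 0) :=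
  Acoef_prime_pow_even_general d p n hdeven hp hpodd hn h hh
end

section
/- Let d ≥ 1 be an odd integer, p an odd prime, n ≥ 1 a natural number, and v = ord_p(n) the p-adic valuation of n. Then for every integer h ≥ 1: A_d(p^h, n) = 0 if 1 ≤ h ≤ v and h is odd; A_d(p^h, n) = ((p−1)/p) · p^{(1−d/2)h} if 1 ≤ h ≤ v and h is even; A_d(p^h, n) = p^{(1−d/2)v + (1−d)/2} · ε_p^{d+1} · ((−n/p^v)/p) if h = v+1 and h is odd; A_d(p^h, n) = −p^{(1−d/2)v − d/2} if h = v+1 and h is even; and A_d(p^h, n) = 0 if h > v+1. Here p^s for the indicated (possibly non-integer) rational exponents s denotes the positive real power. -/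
open Complex Real Finset

-- auxiliary development

noncomputable def ee (x : ℝ) : ℂ := Complex.exp (2 * π * I * x)

lemma ee_add (x y : ℝ) : ee (x + y) = ee x * ee y := by
  rw [ee, ee, ee, ← Complex.exp_add]; push_cast; ring_nf

lemma ee_int (k : ℤ) : ee k = 1 := by
  rw [ee]
  rw [← Complex.exp_int_mul_two_pi_mul_I k]; push_cast; ring_nf

lemma ee_zero : ee 0 = 1 := by simpa using ee_int 0

lemma ee_add_int (x : ℝ) (k : ℤ) : ee (x + k) = ee x := by
  rw [ee_add, ee_int, mul_one]

lemma ee_pow (x : ℝ) (s : ℕ) : ee (x * s) = ee x ^ s := by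
  rw [ee, ee, ← Complex.exp_nat_mul]; push_cast; ring_nf

/-- geometric sum -/
lemma sum_ee_div (q : ℕ) (hq : 0 < q) (c : ℤ) :
    ∑ s ∈ range q, ee (c * s / q) = if (q : ℤ) ∣ c then (q : ℂ) else 0 := by
  have hq0 : (q : ℝ) ≠ 0 := Nat.cast_ne_zero.mpr hq.ne'
  by_cases hdvd : (q : ℤ) ∣ c
  · obtain ⟨k, rfl⟩ := hdvd
    rw [if_pos ⟨k, rfl⟩]
    have : ∀ s ∈ range q, ee ((q * k : ℤ) * s / q) = 1 := by
      intro s _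
      have : ((q * k : ℤ) * s / q : ℝ) = ((k * s : ℤ) : ℝ) := by
        push_cast; field_simp
      rw [this, ee_int]
    rw [Finset.sum_congr rfl this, Finset.sum_const, card_range, nsmul_eq_mul, mul_one]
  · rw [if_neg hdvd]
    have hterm : ∀ s : ℕ, ee (c * s / q) = ee (c / q) ^ s := by
      intro s
      rw [← ee_pow]
      congr 1; ring
    have h2 : (2 * (π:ℂ) * I) ≠ 0 := by
      simp [Real.pi_ne_zero, Complex.I_ne_zero]
    have hz : ee (c / q) ≠ 1 := by
      intro hcon
      rw [ee, Complex.exp_eq_one_iff] at hcon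
      obtain ⟨n, hn⟩ := hcon
      apply hdvd
      rw [mul_comm (n:ℂ)] at hn
      have h3 : (((c : ℝ) / q : ℝ) : ℂ) = (n : ℂ) := mul_left_cancel₀ h2 hn
      have h4 : (c : ℝ) / q = (n : ℝ) := by exact_mod_cast h3
      have h5 : (c : ℝ) = (q : ℝ) * n := by field_simp at h4; linarith
      exact ⟨n, by exact_mod_cast h5⟩
    have hzq : ee (c / q) ^ q = 1 := by
      rw [← ee_pow]
      have : ((c : ℝ) / q * q) = ((c : ℤ) : ℝ) := by field_simp
      rw [this, ee_int]
    rw [Finset.sum_congr rfl (fun s _ => hterm s), geom_sum_eq hz, hzq]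
    simp

/-- splitting a sum over `range (M*K)` -/
lemma sum_range_mul' (M K : ℕ) (f : ℕ → ℂ) :
    ∑ a ∈ range (M * K), f a = ∑ c ∈ range K, ∑ b ∈ range M, f (b + M * c) := by
  induction K with
  | zero => simp
  | succ K ih =>
    rw [Nat.mul_succ, Finset.sum_range_add, ih, Finset.sum_range_succ]
    congr 1
    apply Finset.sum_congr rfl
    intro b _
    congr 1
    ring

lemma sum_multiples (p M : ℕ) (hp : 0 < p) (g : ℕ → ℂ) :
    ∑ u ∈ range (p * M), (if p ∣ u then g u else 0) = ∑ c ∈ range M, g (p * c) := by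
  rw [sum_range_mul' p M]
  apply Finset.sum_congr rfl
  intro c _
  rw [Finset.sum_eq_single 0]
  · simp
  · intro b hb hb0
    rw [if_neg]
    intro hdvd
    rw [add_comm] at hdvd
    have hpb : p ∣ b := (Nat.dvd_add_right (dvd_mul_right p c)).mp hdvd
    exact hb0 (Nat.eq_zero_of_dvd_of_lt hpb (mem_range.mp hb))
  · intro hmem
    exact absurd (mem_range.mpr hp) hmem




lemma sum_zmod (q : ℕ) [NeZero q] (f : ZMod q → ℂ) :
    ∑ t ∈ range q, f (t : ZMod q) = ∑ x : ZMod q, f x := by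
  exact Finset.sum_nbij' (fun t => (t : ZMod q)) (fun x => x.val)
    (fun a _ => mem_univ _) (fun x _ => mem_range.mpr (ZMod.val_lt x))
    (fun a ha => ZMod.val_cast_of_lt (mem_range.mp ha))
    (fun x _ => ZMod.natCast_rightInverse x) (fun a _ => rfl)

lemma stdAddChar_eq_ee (q : ℕ) [NeZero q] (j : ℤ) :
    ZMod.stdAddChar ((j : ZMod q)) = ee ((j : ℝ) / q) := by
  rw [ZMod.stdAddChar_coe, ee]
  congr 1
  push_cast
  ring

section OddPrime
variable (p : ℕ) [Fact p.Prime]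

noncomputable def χC : MulChar (ZMod p) ℂ :=
  (quadraticChar (ZMod p)).ringHomComp (Int.castRingHom ℂ)

noncomputable def GG : ℂ := gaussSum (χC p) (ZMod.stdAddChar)

lemma χC_apply (x : ZMod p) : χC p x = ((quadraticChar (ZMod p) x : ℤ) : ℂ) := rfl

variable (hp2 : p ≠ 2)
include hp2

lemma ringChar_zmod_ne_two : ringChar (ZMod p) ≠ 2 := by
  rw [ZMod.ringChar_zmod_n]; exact hp2

lemma χC_ne_one : χC p ≠ 1 := by
  obtain ⟨b, hb⟩ := quadraticChar_exists_neg_one (ringChar_zmod_ne_two p hp2)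
  intro hcon
  have hbu : IsUnit b := by
    by_contra hbu
    rw [MulChar.map_nonunit _ hbu] at hb
    norm_num at hb
  have h1 : χC p b = 1 := by rw [hcon, MulChar.one_apply hbu]
  rw [χC_apply, hb] at h1
  norm_num at h1

omit hp2 in
lemma χC_quadratic : (χC p).IsQuadratic :=
  (quadraticChar_isQuadratic (ZMod p)).comp _

lemma GG_sq : GG p ^ 2 = χC p (-1) * p := by
  have := gaussSum_sq (χC_ne_one p hp2) (χC_quadratic p)
    (ZMod.isPrimitive_stdAddChar p)
  rwa [ZMod.card] at this

omit hp2 in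
lemma χC_mul_self (b : ZMod p) (hb : b ≠ 0) : χC p b * χC p b = 1 := by
  have h2 := (χC_quadratic p).sq_eq_one
  have h3 : (χC p ^ 2) b = (1 : MulChar (ZMod p) ℂ) b := by rw [h2]
  rw [MulChar.pow_apply' _ two_ne_zero, MulChar.one_apply (Ne.isUnit hb)] at h3
  calc χC p b * χC p b = χC p b ^ 2 := (sq _).symm
    _ = 1 := h3

lemma gaussSum_shift (c : ZMod p) (hc : c ≠ 0) :
    ∑ x : ZMod p, χC p x * ZMod.stdAddChar (c * x) = χC p c * GG p := by
  have hcu : IsUnit c := Ne.isUnit hc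
  have := gaussSum_mulShift (χC p) (ZMod.stdAddChar) hcu.unit
  have heq : gaussSum (χC p) (AddChar.mulShift ZMod.stdAddChar hcu.unit) =
      ∑ x : ZMod p, χC p x * ZMod.stdAddChar (c * x) := by
    unfold gaussSum
    apply Finset.sum_congr rfl
    intro x _
    rw [AddChar.mulShift_apply]
    simp [IsUnit.unit_spec]
  rw [heq] at this
  have hval : (χC p) hcu.unit = χC p c := by simp [IsUnit.unit_spec]
  rw [hval] at this
  calc ∑ x : ZMod p, χC p x * ZMod.stdAddChar (c * x)
      = χC p c * (χC p c * ∑ x : ZMod p, χC p x * ZMod.stdAddChar (c * x)) := by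
        rw [← mul_assoc, χC_mul_self p c hc, one_mul]
    _ = χC p c * GG p := by rw [this]; rfl

lemma sum_sq_count (F : ZMod p → ℂ) :
    ∑ x : ZMod p, F (x ^ 2) =
      ∑ y : ZMod p, (((quadraticChar (ZMod p) y : ℤ) : ℂ) + 1) * F y := by
  classical
  rw [← Finset.sum_fiberwise univ (fun x : ZMod p => x ^ 2) (fun x => F (x ^ 2))]
  apply Finset.sum_congr rfl
  intro y _
  rw [Finset.sum_congr rfl (fun x hx => by
    rw [(Finset.mem_filter.mp hx).2])]
  rw [Finset.sum_const, nsmul_eq_mul]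
  congr 1
  have hcard := quadraticChar_card_sqrts (ringChar_zmod_ne_two p hp2) y
  have hset : ({x : ZMod p | x ^ 2 = y}.toFinset) = univ.filter (fun x => x ^ 2 = y) := by
    ext x; simp
  rw [hset] at hcard
  have : ((#(univ.filter (fun x : ZMod p => x ^ 2 = y)) : ℤ) : ℂ) =
      (((quadraticChar (ZMod p) y : ℤ) : ℂ) + 1) := by
    rw [hcard]; push_cast; ring
  exact_mod_cast this

omit hp2 in
lemma psi_ne_zero : (ZMod.stdAddChar : AddChar (ZMod p) ℂ) ≠ 0 := by
  have hprim := ZMod.isPrimitive_stdAddChar p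
  have h1 : AddChar.mulShift (ZMod.stdAddChar : AddChar (ZMod p) ℂ) 1 ≠ 1 :=
    hprim one_ne_zero
  rw [AddChar.mulShift_one] at h1
  intro hcon
  apply h1
  ext x
  rw [hcon]
  simp

omit hp2 in
lemma sum_psi_shift (b : ZMod p) (hb : b ≠ 0) :
    ∑ x : ZMod p, ZMod.stdAddChar (b * x) = 0 := by
  have : ∑ x : ZMod p, ZMod.stdAddChar (b * x) =
      ∑ x : ZMod p, (ZMod.stdAddChar : AddChar (ZMod p) ℂ) x := by
    apply Fintype.sum_bijective (fun x => b * x)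
    · exact (Equiv.mulLeft₀ b hb).bijective
    · intro x; rfl
  rw [this]
  rw [AddChar.sum_eq_zero_iff_ne_zero]
  exact psi_ne_zero p

lemma sum_psi_mul_sq (b : ZMod p) (hb : b ≠ 0) :
    ∑ x : ZMod p, ZMod.stdAddChar (b * x ^ 2) = χC p b * GG p := by
  rw [sum_sq_count p hp2 (fun y => ZMod.stdAddChar (b * y))]
  have : ∀ y : ZMod p, (((quadraticChar (ZMod p) y : ℤ) : ℂ) + 1) * ZMod.stdAddChar (b * y)
      = χC p y * ZMod.stdAddChar (b * y) + ZMod.stdAddChar (b * y) := by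
    intro y; rw [χC_apply]; ring
  rw [Finset.sum_congr rfl (fun y _ => this y), Finset.sum_add_distrib,
    sum_psi_shift p b hb]
  have h2 : ∑ y : ZMod p, χC p y * ZMod.stdAddChar (b * y) = χC p b * GG p :=
    gaussSum_shift p hp2 b hb
  rw [h2, add_zero]

lemma sum_χC_zero : ∑ x : ZMod p, χC p x = 0 :=
  MulChar.sum_eq_zero_of_ne_one (χC_ne_one p hp2)

end OddPrime

-- ## chunk 3
noncomputable def Sg (q a : ℕ) : ℂ := ∑ t ∈ range q, ee ((a * t ^ 2 : ℕ) / q)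

section P
variable (p : ℕ) [Fact p.Prime] (hpo : Odd p)

lemma hp_pos : 0 < p := (Fact.out : p.Prime).pos

include hpo in
lemma hp2 : p ≠ 2 := by
  intro h; rw [h] at hpo; exact (Nat.not_odd_iff_even.mpr (by norm_num)) hpo

include hpo in
lemma Sg_base (a : ℕ) (ha : ¬ p ∣ a) :
    Sg p a = ((legendreSym p (a : ℤ)) : ℂ) * GG p := by
  have : NeZero p := ⟨(hp_pos p).ne'⟩
  have hstep : ∀ t : ℕ, ee (((a * t ^ 2 : ℕ) : ℝ) / p) =
      ZMod.stdAddChar ((a : ZMod p) * (t : ZMod p) ^ 2) := by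
    intro t
    have h1 : ((a : ZMod p) * (t : ZMod p) ^ 2) = (((a * t ^ 2 : ℕ) : ℤ) : ZMod p) := by
      push_cast; ring
    rw [h1, stdAddChar_eq_ee]
    norm_num
  rw [Sg, Finset.sum_congr rfl (fun t _ => hstep t)]
  rw [sum_zmod p (fun x => ZMod.stdAddChar ((a : ZMod p) * x ^ 2))]
  have hane : (a : ZMod p) ≠ 0 := by
    rw [Ne, ZMod.natCast_eq_zero_iff]
    exact ha
  rw [sum_psi_mul_sq p (hp2 p hpo) _ hane, χC_apply]
  congr 2
  rw [legendreSym]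
  congr 1
  push_cast
  rfl

include hpo in
lemma Sg_step (a k : ℕ) (ha : ¬ p ∣ a) :
    Sg (p ^ (k + 2)) a = (p : ℂ) * Sg (p ^ k) a := by
  have hp0 : 0 < p := hp_pos p
  have hpR : (p : ℝ) ≠ 0 := Nat.cast_ne_zero.mpr hp0.ne'
  have hN : p ^ (k + 2) = p ^ (k + 1) * p := by ring
  rw [Sg, hN, sum_range_mul' (p ^ (k + 1)) p]
  have hterm : ∀ s u : ℕ,
      ee (((a * (u + p ^ (k + 1) * s) ^ 2 : ℕ) : ℝ) / (p ^ (k + 1) * p : ℕ)) =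
      ee (((a * u ^ 2 : ℕ) : ℝ) / (p ^ (k + 2) : ℕ)) * ee (((2 * a * u : ℕ) : ℤ) * s / p) := by
    intro s u
    rw [← ee_add]
    have hint : ((a * (u + p ^ (k + 1) * s) ^ 2 : ℕ) : ℝ) / ((p ^ (k + 1) * p : ℕ) : ℝ) =
        (((a * u ^ 2 : ℕ) : ℝ) / ((p ^ (k + 2) : ℕ) : ℝ) +
          (((2 * a * u : ℕ) : ℤ) : ℝ) * (s : ℝ) / (p : ℝ)) + ((a * p ^ k * s ^ 2 : ℕ) : ℤ) := by
      push_cast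
      field_simp
      ring
    rw [hint, ee_add_int]
  rw [Finset.sum_congr rfl (fun s _ =>
    Finset.sum_congr rfl (fun u _ => hterm s u))]
  rw [Finset.sum_comm]
  have hinner : ∀ u : ℕ,
      ∑ s ∈ range p, ee (((a * u ^ 2 : ℕ) : ℝ) / (p ^ (k + 2) : ℕ)) *
        ee (((2 * a * u : ℕ) : ℤ) * s / p) =
      if p ∣ u then (p : ℂ) * ee (((a * u ^ 2 : ℕ) : ℝ) / (p ^ (k + 2) : ℕ)) else 0 := by
    intro u
    rw [← Finset.mul_sum, sum_ee_div p hp0 ((2 * a * u : ℕ) : ℤ)]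
    have hdvd : ((p : ℤ) ∣ ((2 * a * u : ℕ) : ℤ)) ↔ p ∣ u := by
      rw [Int.natCast_dvd_natCast]
      constructor
      · intro hd
        rcases (Fact.out : p.Prime).dvd_mul.mp hd with hd2 | hd3
        · rcases (Fact.out : p.Prime).dvd_mul.mp hd2 with hd4 | hd5
          · exact absurd ((Nat.prime_dvd_prime_iff_eq (Fact.out : p.Prime) Nat.prime_two).mp hd4)
              (hp2 p hpo)
          · exact absurd hd5 ha
        · exact hd3
      · intro hd; exact Dvd.dvd.mul_left hd _
    by_cases hu : p ∣ u
    · rw [if_pos (hdvd.mpr hu), if_pos hu]; ring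
    · rw [if_neg (fun hc => hu (hdvd.mp hc)), if_neg hu, mul_zero]
  rw [Finset.sum_congr rfl (fun u _ => hinner u)]
  have hsplit : ∀ u : ℕ, (if p ∣ u then (p : ℂ) * ee (((a * u ^ 2 : ℕ) : ℝ) / (p ^ (k + 2) : ℕ)) else 0)
      = (p : ℂ) * (if p ∣ u then ee (((a * u ^ 2 : ℕ) : ℝ) / (p ^ (k + 2) : ℕ)) else 0) := by
    intro u; split_ifs <;> simp
  rw [Finset.sum_congr rfl (fun u _ => hsplit u), ← Finset.mul_sum]
  congr 1
  have hM : p ^ (k + 1) = p * p ^ k := by ring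
  rw [hM, sum_multiples p (p ^ k) hp0]
  rw [Sg]
  apply Finset.sum_congr rfl
  intro c _
  congr 1
  push_cast
  field_simp
  ring

include hpo in
lemma Sg_even (a k : ℕ) (ha : ¬ p ∣ a) : Sg (p ^ (2 * k)) a = (p : ℂ) ^ k := by
  induction k with
  | zero =>
    simp only [Nat.mul_zero, pow_zero]
    rw [Sg]
    simp [ee_zero]
  | succ k ih =>
    have : 2 * (k + 1) = 2 * k + 2 := by ring
    rw [this, Sg_step p hpo a (2 * k) ha, ih]
    ring

include hpo in
lemma Sg_odd (a k : ℕ) (ha : ¬ p ∣ a) :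
    Sg (p ^ (2 * k + 1)) a = (p : ℂ) ^ k * ((legendreSym p (a : ℤ)) : ℂ) * GG p := by
  induction k with
  | zero =>
    simp only [Nat.mul_zero, Nat.zero_add, pow_one, pow_zero, one_mul]
    exact Sg_base p hpo a ha
  | succ k ih =>
    have : 2 * (k + 1) + 1 = 2 * k + 1 + 2 := by ring
    rw [this, Sg_step p hpo a (2 * k + 1) ha, ih]
    ring

end P

lemma gaussSumS_eq_Sg (q a : ℕ) (hq : 0 < q) : gaussSumS q a = Sg q a := by
  have hterm : ∀ t : ℕ, Complex.exp (2 * π * I * (a : ℂ) * (t : ℂ) ^ 2 / (q : ℂ)) =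
      ee (((a * t ^ 2 : ℕ) : ℝ) / q) := by
    intro t
    rw [ee]
    congr 1
    push_cast
    ring
  rw [gaussSumS, Finset.sum_congr rfl (fun t _ => hterm t)]
  set f : ℕ → ℂ := fun t => ee (((a * t ^ 2 : ℕ) : ℝ) / q) with hf
  have h1 : Finset.Icc 1 q = Finset.Ico 1 (q + 1) := by rw [Finset.Ico_add_one_right_eq_Icc]
  have h2 : ∑ t ∈ Finset.Icc 1 q, f t = ∑ t ∈ Finset.Ico 1 q, f t + f q := by
    rw [h1, Finset.sum_Ico_succ_top (by omega)]
  have h3 : ∑ t ∈ range q, f t = f 0 + ∑ t ∈ Finset.Ico 1 q, f t := by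
    rw [Finset.range_eq_Ico, Finset.sum_eq_sum_Ico_succ_bot hq]
  have hfq : f q = f 0 := by
    rw [hf]
    simp only
    have hq0 : ((a * 0 ^ 2 : ℕ) : ℝ) / q = ((0 : ℤ) : ℝ) := by push_cast; simp
    have hqq : ((a * q ^ 2 : ℕ) : ℝ) / q = ((a * q : ℤ) : ℝ) := by
      push_cast
      field_simp
    rw [hq0, hqq, ee_int, ee_int]
  rw [Sg, h2, h3, hfq]
  ring

lemma ee_eq_one_int (x : ℝ) (k : ℤ) (hx : x = k) : ee x = 1 := by rw [hx, ee_int]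

lemma ee_congr_int (x y : ℝ) (k : ℤ) (hxy : x = y + k) : ee x = ee y := by
  rw [hxy, ee_add_int]

lemma harg_gen (p v m b c M : ℕ) (hp : 0 < p) (hM : 0 < M) :
    -(((p ^ v * m) * (b + M * c) : ℕ) : ℝ) / ((M * p ^ (v + 1) : ℕ) : ℝ)
      = -(((p ^ v * m) * b : ℕ) : ℝ) / ((M * p ^ (v + 1) : ℕ) : ℝ)
        + ((-((m * c : ℕ) : ℤ)) : ℝ) * 1 / p + ((0 : ℤ) : ℝ) := by
  have hpR : (p : ℝ) ≠ 0 := Nat.cast_ne_zero.mpr hp.ne'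
  have hMR : (M : ℝ) ≠ 0 := Nat.cast_ne_zero.mpr hM.ne'
  push_cast
  rw [pow_succ]
  field_simp
  ring


-- chunk 4
/-- geometric sum over longer range, vanishing case -/
lemma sum_ee_div_zero (q r : ℕ) (hq : 0 < q) (c : ℤ) (hc : ¬ (q : ℤ) ∣ c) :
    ∑ s ∈ range (q * r), ee (c * s / q) = 0 := by
  have hq0 : (q : ℝ) ≠ 0 := Nat.cast_ne_zero.mpr hq.ne'
  have hterm : ∀ s : ℕ, ee (c * s / q) = ee (c / q) ^ s := by
    intro s
    rw [← ee_pow]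
    congr 1; ring
  have h2 : (2 * (π:ℂ) * I) ≠ 0 := by
    simp [Real.pi_ne_zero, Complex.I_ne_zero]
  have hz : ee (c / q) ≠ 1 := by
    intro hcon
    rw [ee, Complex.exp_eq_one_iff] at hcon
    obtain ⟨n, hn⟩ := hcon
    apply hc
    rw [mul_comm (n:ℂ)] at hn
    have h3 : (((c : ℝ) / q : ℝ) : ℂ) = (n : ℂ) := mul_left_cancel₀ h2 hn
    have h4 : (c : ℝ) / q = (n : ℝ) := by exact_mod_cast h3
    have h5 : (c : ℝ) = (q : ℝ) * n := by field_simp at h4; linarith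
    exact ⟨n, by exact_mod_cast h5⟩
  have hzq : ee (c / q) ^ (q * r) = 1 := by
    rw [← ee_pow]
    have : ((c : ℝ) / q * (q * r : ℕ)) = ((c * r : ℤ) : ℝ) := by
      push_cast; field_simp
    rw [this, ee_int]
  rw [Finset.sum_congr rfl (fun s _ => hterm s), geom_sum_eq hz, hzq]
  simp

/-- factoring engine -/
lemma sum_if_factor (M K : ℕ) (F G H : ℕ → ℂ)
    (hF : ∀ b c, b < M → c < K → F (b + M * c) = G b * H c) :
    ∑ a ∈ range (M * K), F a = (∑ c ∈ range K, H c) * (∑ b ∈ range M, G b) := by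
  rw [sum_range_mul' M K]
  rw [Finset.sum_mul]
  apply Finset.sum_congr rfl
  intro c hc
  rw [Finset.mul_sum]
  apply Finset.sum_congr rfl
  intro b hb
  rw [hF b c (mem_range.mp hb) (mem_range.mp hc)]
  ring

section U
variable (p : ℕ) [Fact p.Prime] (hpo : Odd p) (v m : ℕ) (hm : ¬ p ∣ m)

local notation "nn" => p ^ v * m

lemma legendre_shift (b M c : ℕ) (hM : p ∣ M) :
    legendreSym p ((b + M * c : ℕ) : ℤ) = legendreSym p (b : ℤ) := by
  obtain ⟨r, rfl⟩ := hM
  rw [legendreSym, legendreSym]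
  congr 1
  push_cast
  rw [ZMod.natCast_self]
  ring

lemma dvd_shift (b M c : ℕ) (hM : p ∣ M) : p ∣ (b + M * c) ↔ p ∣ b := by
  constructor
  · intro hd
    rw [add_comm] at hd
    exact (Nat.dvd_add_right (hM.mul_right c)).mp hd
  · intro hd
    exact dvd_add hd (hM.mul_right c)

include hpo hm

/-- case `h ≤ v`, even part (Ramanujan sum) -/
lemma U0_le (h : ℕ) (hh : 1 ≤ h) (hdvd : p ^ h ∣ nn) :
    ∑ a ∈ range (p ^ h), (if ¬ p ∣ a then ee (-((nn * a : ℕ) : ℝ) / ((p ^ h : ℕ) : ℝ)) else 0)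
      = (p : ℂ) ^ h - (p : ℂ) ^ (h - 1) := by
  have hp0 : 0 < p := (Fact.out : p.Prime).pos
  obtain ⟨r, hr⟩ := hdvd
  have hee : ∀ a : ℕ, ee (-((nn * a : ℕ) : ℝ) / ((p ^ h : ℕ) : ℝ)) = 1 := by
    intro a
    apply ee_eq_one_int _ (-(r * a : ℤ))
    rw [hr]
    have hph : ((p : ℝ)) ^ h ≠ 0 := by positivity
    push_cast
    field_simp
  rw [Finset.sum_congr rfl (fun a _ => by rw [hee a])]
  have : ∀ a : ℕ, (if ¬ p ∣ a then (1:ℂ) else 0) = 1 - (if p ∣ a then (1:ℂ) else 0) := by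
    intro a; split_ifs <;> simp
  rw [Finset.sum_congr rfl (fun a _ => this a), Finset.sum_sub_distrib]
  have h1 : p ^ h = p * p ^ (h - 1) := by
    rw [← pow_succ']
    congr 1
    omega
  rw [Finset.sum_const, card_range]
  rw [h1, sum_multiples p (p ^ (h - 1)) hp0 (fun _ => (1 : ℂ)), Finset.sum_const, card_range]
  push_cast
  rw [show ((p : ℂ)) ^ h = (p : ℂ) * (p : ℂ) ^ (h - 1) from by
    rw [← pow_succ']; congr 1; omega]
  ring

/-- case `h ≤ v`, odd part -/
lemma U1_le (h : ℕ) (hh : 1 ≤ h) (hdvd : p ^ h ∣ nn) :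
    ∑ a ∈ range (p ^ h),
      (if ¬ p ∣ a then ((legendreSym p (a : ℤ)) : ℂ) * ee (-((nn * a : ℕ) : ℝ) / ((p ^ h : ℕ) : ℝ)) else 0)
      = 0 := by
  have hp0 : 0 < p := (Fact.out : p.Prime).pos
  have : NeZero p := ⟨hp0.ne'⟩
  obtain ⟨r, hr⟩ := hdvd
  have hee : ∀ a : ℕ, ee (-((nn * a : ℕ) : ℝ) / ((p ^ h : ℕ) : ℝ)) = 1 := by
    intro a
    apply ee_eq_one_int _ (-(r * a : ℤ))
    rw [hr]
    have hph : ((p : ℝ)) ^ h ≠ 0 := by positivity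
    push_cast
    field_simp
  rw [Finset.sum_congr rfl (fun a _ => by rw [hee a, mul_one])]
  have h1 : p ^ h = p * p ^ (h - 1) := by
    rw [← pow_succ']; congr 1; omega
  rw [h1, sum_if_factor p (p ^ (h-1))
    (F := fun a => if ¬ p ∣ a then ((legendreSym p (a : ℤ)) : ℂ) else 0)
    (G := fun b => if ¬ p ∣ b then ((legendreSym p (b : ℤ)) : ℂ) else 0)
    (H := fun _ => 1)
    (by
      intro b c hb hc
      beta_reduce
      rw [mul_one]
      by_cases hpb : p ∣ b
      · rw [if_neg (by simp [((dvd_shift p b p c (dvd_refl p)).mpr hpb)]),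
          if_neg (by simp [hpb])]
      · rw [if_pos (by rw [dvd_shift p b p c (dvd_refl p)]; exact hpb), if_pos hpb,
          legendre_shift p b p c (dvd_refl p)])]
  have hz : ∑ b ∈ range p, (if ¬ p ∣ b then ((legendreSym p (b : ℤ)) : ℂ) else 0) = 0 := by
    have hcong : ∀ b : ℕ, (if ¬ p ∣ b then ((legendreSym p (b : ℤ)) : ℂ) else 0)
        = χC p ((b : ℕ) : ZMod p) := by
      intro b
      by_cases hpb : p ∣ b
      · rw [if_neg (by simp [hpb]), χC_apply]
        have : ((b : ℕ) : ZMod p) = 0 := (ZMod.natCast_eq_zero_iff b p).mpr hpb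
        rw [this]
        simp
      · rw [if_pos hpb, χC_apply, legendreSym]
        congr 2
        push_cast
        rfl
    rw [Finset.sum_congr rfl (fun b _ => hcong b)]
    rw [sum_zmod p (fun x => χC p x)]
    exact sum_χC_zero p (hp2 p hpo)
  rw [hz, mul_zero]

/-- case `h = v + 1`, even part -/
lemma U0_eq :
    ∑ a ∈ range (p ^ (v + 1)),
      (if ¬ p ∣ a then ee (-((nn * a : ℕ) : ℝ) / ((p ^ (v+1) : ℕ) : ℝ)) else 0)
      = -((p : ℂ) ^ v) := by
  have hp0 : 0 < p := (Fact.out : p.Prime).pos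
  have hpR : (p : ℝ) ≠ 0 := Nat.cast_ne_zero.mpr hp0.ne'
  have hee : ∀ a : ℕ, ee (-((nn * a : ℕ) : ℝ) / ((p ^ (v+1) : ℕ) : ℝ)) =
      ee ((-(m : ℤ)) * a / p) := by
    intro a
    congr 1
    push_cast
    rw [pow_succ]
    field_simp
  rw [Finset.sum_congr rfl (fun a _ => by rw [hee a])]
  have h1 : p ^ (v + 1) = p * p ^ v := by rw [pow_succ']
  rw [h1, sum_if_factor p (p ^ v)
    (F := fun a => if ¬ p ∣ a then ee ((-(m : ℤ)) * a / p) else 0)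
    (G := fun b => if ¬ p ∣ b then ee ((-(m : ℤ)) * b / p) else 0)
    (H := fun _ => 1)
    (by
      intro b c hb hc
      beta_reduce
      rw [mul_one]
      by_cases hpb : p ∣ b
      · rw [if_neg (by simp [((dvd_shift p b p c (dvd_refl p)).mpr hpb)]), if_neg (by simp [hpb])]
      · rw [if_pos (by rw [dvd_shift p b p c (dvd_refl p)]; exact hpb), if_pos hpb]
        apply ee_congr_int _ _ (-(m * c : ℤ))
        push_cast
        field_simp
        ring)]
  have hgeom : ∑ b ∈ range p, (if ¬ p ∣ b then ee ((-(m : ℤ)) * b / p) else 0)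
      = -1 := by
    have hsub : ∀ b : ℕ, (if ¬ p ∣ b then ee ((-(m : ℤ)) * b / p) else 0)
        = ee ((-(m : ℤ)) * b / p) - (if p ∣ b then ee ((-(m : ℤ)) * b / p) else 0) := by
      intro b; split_ifs <;> simp
    rw [Finset.sum_congr rfl (fun b _ => hsub b), Finset.sum_sub_distrib]
    have hnd : ¬ (p : ℤ) ∣ (-(m : ℤ)) := by
      rw [Int.dvd_neg, Int.natCast_dvd_natCast]
      exact hm
    have hall : ∑ x ∈ range p, ee ((-(m : ℤ)) * x / p) = 0 := by
      have h0 := sum_ee_div p hp0 (-(m:ℤ))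
      rw [if_neg hnd] at h0
      rw [← h0]
      apply Finset.sum_congr rfl
      intro x _
      congr 1
      push_cast
      ring
    rw [hall]
    have honly : ∑ b ∈ range p, (if p ∣ b then ee ((-(m : ℤ)) * b / p) else 0) = 1 := by
      rw [Finset.sum_eq_single 0]
      · simp [ee_zero]
      · intro b hb hb0
        rw [if_neg]
        intro hd
        exact hb0 (Nat.eq_zero_of_dvd_of_lt hd (mem_range.mp hb))
      · intro hmem; exact absurd (mem_range.mpr hp0) hmem
    rw [honly]
    ring
  rw [hgeom, Finset.sum_const, card_range]
  push_cast
  ring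

/-- case `h = v + 1`, odd part -/
lemma U1_eq :
    ∑ a ∈ range (p ^ (v + 1)),
      (if ¬ p ∣ a then ((legendreSym p (a : ℤ)) : ℂ) * ee (-((nn * a : ℕ) : ℝ) / ((p ^ (v+1) : ℕ) : ℝ)) else 0)
      = (p : ℂ) ^ v * ((legendreSym p (-(m : ℤ))) : ℂ) * GG p := by
  have hp0 : 0 < p := (Fact.out : p.Prime).pos
  have : NeZero p := ⟨hp0.ne'⟩
  have hpR : (p : ℝ) ≠ 0 := Nat.cast_ne_zero.mpr hp0.ne'
  have hee : ∀ a : ℕ, ee (-((nn * a : ℕ) : ℝ) / ((p ^ (v+1) : ℕ) : ℝ)) =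
      ee ((-(m : ℤ)) * a / p) := by
    intro a
    congr 1
    push_cast
    rw [pow_succ]
    field_simp
  rw [Finset.sum_congr rfl (fun a _ => by rw [hee a])]
  have h1 : p ^ (v + 1) = p * p ^ v := by rw [pow_succ']
  rw [h1, sum_if_factor p (p ^ v)
    (F := fun a => if ¬ p ∣ a then ((legendreSym p (a : ℤ)) : ℂ) * ee ((-(m : ℤ)) * a / p) else 0)
    (G := fun b => if ¬ p ∣ b then ((legendreSym p (b : ℤ)) : ℂ) * ee ((-(m : ℤ)) * b / p) else 0)
    (H := fun _ => 1)
    (by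
      intro b c hb hc
      beta_reduce
      rw [mul_one]
      by_cases hpb : p ∣ b
      · rw [if_neg (by simp [((dvd_shift p b p c (dvd_refl p)).mpr hpb)]), if_neg (by simp [hpb])]
      · rw [if_pos (by rw [dvd_shift p b p c (dvd_refl p)]; exact hpb), if_pos hpb,
          legendre_shift p b p c (dvd_refl p)]
        congr 1
        apply ee_congr_int _ _ (-(m * c : ℤ))
        push_cast
        field_simp
        ring)]
  have hmain : ∑ b ∈ range p,
      (if ¬ p ∣ b then ((legendreSym p (b : ℤ)) : ℂ) * ee ((-(m : ℤ)) * b / p) else 0)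
      = ((legendreSym p (-(m : ℤ))) : ℂ) * GG p := by
    have hcong : ∀ b : ℕ, (if ¬ p ∣ b then ((legendreSym p (b : ℤ)) : ℂ) * ee ((-(m : ℤ)) * b / p) else 0)
        = χC p ((b : ℕ) : ZMod p) * ZMod.stdAddChar (((-(m:ℤ)) : ZMod p) * ((b : ℕ) : ZMod p)) := by
      intro b
      by_cases hpb : p ∣ b
      · rw [if_neg (by simp [hpb]), χC_apply]
        have hb0 : ((b : ℕ) : ZMod p) = 0 := (ZMod.natCast_eq_zero_iff b p).mpr hpb
        rw [hb0]
        simp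
      · rw [if_pos hpb, χC_apply]
        have : (((-(m:ℤ)) : ZMod p) * ((b : ℕ) : ZMod p)) = (((-(m : ℤ)) * b : ℤ) : ZMod p) := by
          push_cast; ring
        rw [this, stdAddChar_eq_ee]
        have harg : (((-(m : ℤ)) * b : ℤ) : ℝ) / p = ((-(m:ℤ)) : ℝ) * b / p := by push_cast; ring
        rw [harg]
        congr 2
        rw [legendreSym]
        congr 1
        push_cast
        rfl
    rw [Finset.sum_congr rfl (fun b _ => hcong b)]
    rw [sum_zmod p (fun x => χC p x * ZMod.stdAddChar (((-(m:ℤ)) : ZMod p) * x))]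
    have hmne : ((-(m:ℤ)) : ZMod p) ≠ 0 := by
      intro hc0
      rw [show ((-(m:ℤ)) : ZMod p) = -((m : ℕ) : ZMod p) by push_cast; ring] at hc0
      rw [neg_eq_zero, ZMod.natCast_eq_zero_iff] at hc0
      exact hm hc0
    rw [gaussSum_shift p (hp2 p hpo) _ hmne, χC_apply, legendreSym]
    norm_cast
  rw [hmain, Finset.sum_const, card_range]
  push_cast
  ring

/-- case `h ≥ v + 2`: both variants vanish.  `w` is the weight (`1` or Legendre). -/
lemma U_gt (h : ℕ) (hgt : v + 2 ≤ h) (w : ℕ → ℂ)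
    (hw : ∀ b M c, p ∣ M → w (b + M * c) = w b) :
    ∑ a ∈ range (p ^ h),
      (if ¬ p ∣ a then w a * ee (-((nn * a : ℕ) : ℝ) / ((p ^ h : ℕ) : ℝ)) else 0) = 0 := by
  have hp0 : 0 < p := (Fact.out : p.Prime).pos
  have hpR : (p : ℝ) ≠ 0 := Nat.cast_ne_zero.mpr hp0.ne'
  set M := p ^ (h - v - 1) with hM
  have hMdvd : p ∣ M := dvd_pow_self p (by omega)
  have hsplit : p ^ h = M * p ^ (v + 1) := by
    rw [hM, ← pow_add]
    congr 1
    omega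
  rw [hsplit, sum_if_factor M (p ^ (v + 1))
    (F := fun a => if ¬ p ∣ a then w a * ee (-((nn * a : ℕ) : ℝ) / ((M * p ^ (v + 1) : ℕ) : ℝ)) else 0)
    (G := fun b => if ¬ p ∣ b then w b * ee (-((nn * b : ℕ) : ℝ) / ((M * p ^ (v + 1) : ℕ) : ℝ)) else 0)
    (H := fun c => ee ((-(m : ℤ)) * c / p))
    (by
      intro b c hb hc
      beta_reduce
      by_cases hpb : p ∣ b
      · rw [if_neg (by simp [((dvd_shift p b M c hMdvd).mpr hpb)]), if_neg (by simp [hpb]), zero_mul]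
      · rw [if_pos (by rw [dvd_shift p b M c hMdvd]; exact hpb), if_pos hpb, hw b M c hMdvd]
        have harg := harg_gen p v m b c M hp0 (pow_pos hp0 _)
        have h2 : -(((nn * (b + M * c) : ℕ)) : ℝ) / ((M * p ^ (v + 1) : ℕ) : ℝ)
            = (-((nn * b : ℕ) : ℝ) / ((M * p ^ (v + 1) : ℕ) : ℝ) + ((-(m : ℤ)) : ℝ) * c / p)
              + ((0 : ℤ) : ℝ) := by
          rw [harg]
          push_cast
          ring
        rw [ee_congr_int _ _ 0 h2, ee_add]
        ring)]
  have hzero : ∑ c ∈ range (p ^ (v + 1)), ee ((-(m : ℤ)) * c / p) = 0 := by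
    have hpv : p ^ (v + 1) = p * p ^ v := by rw [pow_succ']
    have h0 := sum_ee_div_zero p (p ^ v) hp0 (-(m:ℤ)) (by
      rw [Int.dvd_neg, Int.natCast_dvd_natCast]; exact hm)
    rw [hpv, ← h0]
    apply Finset.sum_congr rfl
    intro x _
    congr 1
    push_cast
    ring
  rw [hzero, zero_mul]

end U

-- ## chunk 5
lemma Acoef_eq (d q n' : ℕ) (hq : 2 ≤ q) :
    Acoef d q n' = ∑ a ∈ range q,
      (if Nat.gcd a q = 1 then ((q : ℂ)⁻¹ * Sg q a) ^ d * ee (-((n' * a : ℕ) : ℝ) / q) else 0) := by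
  rw [Acoef, Finset.sum_filter]
  have hterm : ∀ a : ℕ,
      (if Nat.gcd a q = 1 then
        ((q:ℂ)⁻¹ * gaussSumS q a) ^ d * Complex.exp (-(2*π*I) * (n' : ℂ) * (a : ℂ) / (q : ℂ)) else 0)
      = (if Nat.gcd a q = 1 then ((q:ℂ)⁻¹ * Sg q a) ^ d * ee (-((n' * a : ℕ) : ℝ) / q) else 0) := by
    intro a
    by_cases hg : Nat.gcd a q = 1
    · rw [if_pos hg, if_pos hg, gaussSumS_eq_Sg q a (by omega), ee]
      congr 2
      push_cast
      ring
    · rw [if_neg hg, if_neg hg]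
  rw [Finset.sum_congr rfl (fun a _ => hterm a)]
  set F : ℕ → ℂ := fun a =>
    (if Nat.gcd a q = 1 then ((q:ℂ)⁻¹ * Sg q a) ^ d * ee (-((n' * a : ℕ) : ℝ) / q) else 0) with hF
  have hFq : F q = 0 := by
    rw [hF]
    simp only
    rw [if_neg]
    rw [Nat.gcd_self]
    omega
  have hF0 : F 0 = 0 := by
    rw [hF]
    simp only
    rw [if_neg]
    rw [Nat.gcd_zero_left]
    omega
  have h1 : ∑ a ∈ Finset.Icc 1 q, F a = ∑ a ∈ Finset.Ico 1 q, F a + F q := by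
    rw [← Finset.Ico_add_one_right_eq_Icc, Finset.sum_Ico_succ_top (by omega)]
  have h2 : ∑ a ∈ range q, F a = F 0 + ∑ a ∈ Finset.Ico 1 q, F a := by
    rw [Finset.range_eq_Ico, Finset.sum_eq_sum_Ico_succ_bot (by omega)]
  rw [h1, h2, hFq, hF0]
  ring

lemma legendre_pow_odd (p : ℕ) [Fact p.Prime] (d : ℕ) (hd : Odd d) (a : ℕ) (ha : ¬ p ∣ a) :
    ((legendreSym p (a : ℤ)) : ℂ) ^ d = ((legendreSym p (a : ℤ)) : ℂ) := by
  have ha' : ((a : ℤ) : ZMod p) ≠ 0 := by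
    intro hc
    apply ha
    have : ((a : ℕ) : ZMod p) = 0 := by push_cast at hc ⊢; exact hc
    exact (ZMod.natCast_eq_zero_iff a p).mp this
  rcases legendreSym.eq_one_or_neg_one p ha' with h1 | h1
  · rw [h1]; simp
  · rw [h1]; push_cast; exact Odd.neg_one_pow hd

lemma epsP_sq_s13 (p : ℕ) [Fact p.Prime] (hpo : Odd p) : epsP p ^ 2 = χC p (-1) := by
  have hχ : χC p (-1) = ((legendreSym p (-1) : ℤ) : ℂ) := by
    rw [χC_apply, legendreSym]
    norm_cast
  have hp2' : p % 2 = 1 := Nat.odd_iff.mp hpo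
  rw [hχ, legendreSym.at_neg_one (hp2 p hpo), ZMod.χ₄_nat_eq_if_mod_four,
    if_neg (by omega : ¬ p % 2 = 0)]
  have h44 : p % 4 = 1 ∨ p % 4 = 3 := by omega
  rcases h44 with h4 | h4
  · rw [if_pos h4, epsP, if_pos h4]
    norm_num
  · rw [if_neg (by omega), epsP, if_neg (by omega)]
    push_cast
    exact Complex.I_sq

/-- Explicit values of `A_d(p^h, n)` for odd `d`, odd prime `p` and `n ≥ 1`,
in terms of `v = ord_p(n)`; the powers of `p` are real powers and `(·/p)` is the
Legendre symbol. -/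
theorem Acoef_prime_pow_odd (d p n : ℕ) [Fact p.Prime] (hd : 1 ≤ d) (hdodd : Odd d)
    (hpodd : Odd p) (hn : 1 ≤ n) (h : ℕ) (hh : 1 ≤ h) :
    (h ≤ padicValNat p n → Odd h → Acoef d (p ^ h) n = 0) ∧
    (h ≤ padicValNat p n → Even h →
      Acoef d (p ^ h) n =
        (((p : ℂ) - 1) / (p : ℂ)) *
          ((((p : ℝ) ^ ((1 - (d : ℝ) / 2) * (h : ℝ)) : ℝ) : ℂ))) ∧
    (h = padicValNat p n + 1 → Odd h →
      Acoef d (p ^ h) n =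
        (((p : ℝ) ^ ((1 - (d : ℝ) / 2) * (padicValNat p n : ℝ) + (1 - (d : ℝ)) / 2) : ℝ) : ℂ) *
          epsP p ^ (d + 1) *
          ((legendreSym p (-((n / p ^ padicValNat p n : ℕ) : ℤ)) : ℤ) : ℂ)) ∧
    (h = padicValNat p n + 1 → Even h →
      Acoef d (p ^ h) n =
        -((((p : ℝ) ^ ((1 - (d : ℝ) / 2) * (padicValNat p n : ℝ) - (d : ℝ) / 2) : ℝ) : ℂ))) ∧
    (padicValNat p n + 1 < h → Acoef d (p ^ h) n = 0) := by
  have hprime : p.Prime := Fact.out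
  have hp0 : 0 < p := hprime.pos
  have hp3 : 3 ≤ p := by
    have h2le := hprime.two_le
    have hne2 := hp2 p hpodd
    omega
  have hpC : (p : ℂ) ≠ 0 := Nat.cast_ne_zero.mpr hp0.ne'
  set v := padicValNat p n with hv
  set m := n / p ^ v with hmdef
  have hdvdn : p ^ v ∣ n := pow_padicValNat_dvd
  have hnm : n = p ^ v * m := by
    rw [hmdef, Nat.mul_div_cancel' hdvdn]
  have hm : ¬ p ∣ m := by
    intro hc
    obtain ⟨m', hm'⟩ := hc
    have hdvd2 : p ^ (v + 1) ∣ n := ⟨m', by rw [hnm, hm']; ring⟩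
    exact pow_succ_padicValNat_not_dvd (by omega) hdvd2
  have hq2 : 2 ≤ p ^ h := by
    calc 2 ≤ p := by omega
    _ = p ^ 1 := (pow_one p).symm
    _ ≤ p ^ h := Nat.pow_le_pow_right hp0 hh
  -- gcd condition
  have hgcd : ∀ a : ℕ, (Nat.gcd a (p ^ h) = 1 ↔ ¬ p ∣ a) := by
    intro a
    rw [show (Nat.gcd a (p ^ h) = 1) = Nat.Coprime a (p ^ h) from rfl,
      Nat.coprime_pow_right_iff (by omega), Nat.coprime_comm]
    exact hprime.coprime_iff_not_dvd
  -- even reduction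
  have Heven : ∀ k : ℕ, h = 2 * k → Acoef d (p ^ h) n =
      ((p : ℂ) ^ (k * d))⁻¹ *
        ∑ a ∈ range (p ^ h),
          (if ¬ p ∣ a then ee (-((p ^ v * m * a : ℕ) : ℝ) / ((p ^ h : ℕ) : ℝ)) else 0) := by
    intro k hk
    rw [Acoef_eq d (p ^ h) n hq2]
    have hterm : ∀ a : ℕ,
        (if Nat.gcd a (p ^ h) = 1 then (((p ^ h : ℕ) : ℂ)⁻¹ * Sg (p ^ h) a) ^ d * ee (-((n * a : ℕ) : ℝ) / ((p ^ h : ℕ) : ℝ)) else 0)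
        = ((p : ℂ) ^ (k * d))⁻¹ *
          (if ¬ p ∣ a then ee (-((p ^ v * m * a : ℕ) : ℝ) / ((p ^ h : ℕ) : ℝ)) else 0) := by
      intro a
      by_cases hpa : p ∣ a
      · rw [if_neg (by rw [hgcd a]; exact fun hcon => hcon hpa), if_neg (by exact fun hcon => hcon hpa)]
        ring
      · rw [if_pos ((hgcd a).mpr hpa), if_pos hpa]
        rw [show ((p ^ h : ℕ) : ℂ) = (p : ℂ) ^ h from by push_cast; rfl]
        rw [hk, Sg_even p hpodd a k hpa, ← hk]
        have hc : ((p ^ h : ℂ)⁻¹ * (p : ℂ) ^ k) ^ d = ((p : ℂ) ^ (k * d))⁻¹ := by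
          have hph : ((p : ℂ)) ^ h = (p : ℂ) ^ k * (p : ℂ) ^ k := by
            rw [← pow_add]
            congr 1
            omega
          rw [hph]
          rw [mul_inv]
          rw [mul_assoc, inv_mul_cancel₀ (pow_ne_zero _ hpC), mul_one]
          rw [inv_pow, ← pow_mul]
        rw [hc]
        congr 2
        rw [hnm]
    rw [Finset.sum_congr rfl (fun a _ => hterm a), ← Finset.mul_sum]
  -- odd reduction
  have Hodd : ∀ k : ℕ, h = 2 * k + 1 → Acoef d (p ^ h) n =
      ((p : ℂ) ^ ((k + 1) * d))⁻¹ * GG p ^ d *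
        ∑ a ∈ range (p ^ h),
          (if ¬ p ∣ a then ((legendreSym p (a : ℤ)) : ℂ) * ee (-((p ^ v * m * a : ℕ) : ℝ) / ((p ^ h : ℕ) : ℝ)) else 0) := by
    intro k hk
    rw [Acoef_eq d (p ^ h) n hq2]
    have hterm : ∀ a : ℕ,
        (if Nat.gcd a (p ^ h) = 1 then (((p ^ h : ℕ) : ℂ)⁻¹ * Sg (p ^ h) a) ^ d * ee (-((n * a : ℕ) : ℝ) / ((p ^ h : ℕ) : ℝ)) else 0)
        = ((p : ℂ) ^ ((k + 1) * d))⁻¹ * GG p ^ d *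
          (if ¬ p ∣ a then ((legendreSym p (a : ℤ)) : ℂ) * ee (-((p ^ v * m * a : ℕ) : ℝ) / ((p ^ h : ℕ) : ℝ)) else 0) := by
      intro a
      by_cases hpa : p ∣ a
      · rw [if_neg (by rw [hgcd a]; exact fun hcon => hcon hpa), if_neg (by exact fun hcon => hcon hpa)]
        ring
      · rw [if_pos ((hgcd a).mpr hpa), if_pos hpa]
        rw [show ((p ^ h : ℕ) : ℂ) = (p : ℂ) ^ h from by push_cast; rfl]
        rw [hk, Sg_odd p hpodd a k hpa, ← hk]
        have hsplit2 : (((p : ℂ) ^ h)⁻¹ * ((p:ℂ) ^ k * ((legendreSym p (a : ℤ)) : ℂ) * GG p)) ^ d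
            = ((p : ℂ) ^ ((k + 1) * d))⁻¹ * GG p ^ d * ((legendreSym p (a : ℤ)) : ℂ) := by
          have hph : ((p : ℂ)) ^ h = (p : ℂ) ^ (k + 1) * (p : ℂ) ^ k := by
            rw [← pow_add]
            congr 1
            omega
          have hstep : ((p : ℂ) ^ h)⁻¹ * ((p:ℂ) ^ k * ((legendreSym p (a : ℤ)) : ℂ) * GG p)
              = ((p : ℂ) ^ (k+1))⁻¹ * ((legendreSym p (a : ℤ)) : ℂ) * GG p := by
            rw [hph, mul_inv]
            field_simp
          rw [hstep, mul_pow, mul_pow, legendre_pow_odd p d hdodd a hpa, inv_pow, ← pow_mul]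
          ring
        rw [hsplit2]
        have heq2 : ee (-((n * a : ℕ) : ℝ) / (p ^ h : ℕ)) = ee (-((p ^ v * m * a : ℕ) : ℝ) / ((p ^ h : ℕ) : ℝ)) := by
          congr 2
          rw [hnm]
        rw [heq2]
        ring
    rw [Finset.sum_congr rfl (fun a _ => hterm a), ← Finset.mul_sum]
  refine ⟨?_, ?_, ?_, ?_, ?_⟩
  -- Case 1 : h ≤ v, odd
  · intro hle hodd
    obtain ⟨k, hk⟩ := hodd
    rw [Hodd k hk]
    rw [U1_le p hpodd v m hm h hh (dvd_trans (pow_dvd_pow p hle) (dvd_mul_right _ _))]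
    ring
  -- Case 2 : h ≤ v, even
  · intro hle heven
    obtain ⟨k, hk'⟩ := heven
    have hk : h = 2 * k := by omega
    have hk1 : 1 ≤ k := by omega
    rw [Heven k hk]
    rw [U0_le p hpodd v m hm h hh (dvd_trans (pow_dvd_pow p hle) (dvd_mul_right _ _))]
    -- numeric identity
    have hx : (1 - (d : ℝ) / 2) * (h : ℝ) = ((2 * (k:ℤ) - (k:ℤ) * (d:ℤ) : ℤ) : ℝ) := by
      have : (h : ℝ) = 2 * (k : ℝ) := by exact_mod_cast congrArg (Nat.cast : ℕ → ℝ) hk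
      rw [this]
      push_cast
      ring
    rw [hx, Real.rpow_intCast, Complex.ofReal_zpow]
    rw [show (2 * (k:ℤ) - (k:ℤ) * (d:ℤ)) = ((2 * k : ℕ) : ℤ) - ((k * d : ℕ) : ℤ) by push_cast; ring]
    rw [zpow_sub₀ (by exact_mod_cast hpC), zpow_natCast, zpow_natCast]
    push_cast
    have hsucc : ((p:ℂ)) ^ h = (p:ℂ) ^ (h - 1) * p := by
      rw [← pow_succ]
      congr 1
      omega
    have h2k : ((p:ℂ)) ^ (2 * k) = (p:ℂ) ^ h := by rw [hk]
    rw [hsucc, h2k, hsucc]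
    have hpow1 : ((p:ℂ)) ^ (h - 1) ≠ 0 := pow_ne_zero _ hpC
    have hpow2 : ((p:ℂ)) ^ (k * d) ≠ 0 := pow_ne_zero _ hpC
    field_simp
  -- Case 3 : h = v + 1, odd
  · intro heq hodd
    subst heq
    obtain ⟨k, hk⟩ := hodd
    have hveq : v = 2 * k := by omega
    obtain ⟨t, ht⟩ := hdodd
    set w := t + 1 with hw
    have hdw : d + 1 = 2 * w := by omega
    rw [Hodd k hk]
    rw [U1_eq p hpodd v m hm]
    -- G^(d+1)
    have hGd : GG p ^ d * GG p = (χC p (-1)) ^ w * (p:ℂ) ^ w := by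
      have : GG p ^ d * GG p = GG p ^ (d + 1) := by rw [pow_succ]
      rw [this, hdw, pow_mul, GG_sq p (hp2 p hpodd), mul_pow]
    -- RHS exponent
    have hx : (1 - (d : ℝ) / 2) * (v : ℝ) + (1 - (d : ℝ)) / 2
        = ((((2 * k + w : ℕ) : ℤ) - (((k + 1) * d : ℕ) : ℤ) : ℤ) : ℝ) := by
      have hvr : (v : ℝ) = 2 * (k : ℝ) := by exact_mod_cast congrArg (Nat.cast : ℕ → ℝ) hveq
      have hdr : (d : ℝ) = 2 * (w : ℝ) - 1 := by
        have : (d : ℝ) + 1 = 2 * (w : ℝ) := by exact_mod_cast congrArg (Nat.cast : ℕ → ℝ) hdw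
        linarith
      push_cast
      rw [hvr, hdr]
      push_cast
      ring
    rw [hx, Real.rpow_intCast, Complex.ofReal_zpow]
    rw [zpow_sub₀ (by exact_mod_cast hpC), zpow_natCast, zpow_natCast]
    push_cast
    -- epsP
    have heps : epsP p ^ (d + 1) = (χC p (-1)) ^ w := by
      rw [hdw, pow_mul, epsP_sq_s13 p hpodd]
    rw [heps]
    -- final algebra
    have hpw1 : ((p:ℂ)) ^ ((k + 1) * d) ≠ 0 := pow_ne_zero _ hpC
    have hpw2 : ((p:ℂ)) ^ (2 * k + w) = (p:ℂ) ^ (2 * k) * (p:ℂ) ^ w := by rw [pow_add]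
    have hveq' : ((p:ℂ)) ^ v = (p:ℂ) ^ (2 * k) := by rw [hveq]
    rw [hveq']
    calc ((p:ℂ) ^ ((k+1)*d))⁻¹ * GG p ^ d * ((p:ℂ) ^ (2*k) * ((legendreSym p (-(m : ℤ))) : ℂ) * GG p)
        = ((p:ℂ) ^ ((k+1)*d))⁻¹ * (p:ℂ) ^ (2*k) * ((legendreSym p (-(m : ℤ))) : ℂ) * (GG p ^ d * GG p) := by ring
      _ = ((p:ℂ) ^ ((k+1)*d))⁻¹ * (p:ℂ) ^ (2*k) * ((legendreSym p (-(m : ℤ))) : ℂ) * ((χC p (-1)) ^ w * (p:ℂ) ^ w) := by rw [hGd]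
      _ = (p:ℂ) ^ (2*k + w) / (p:ℂ) ^ ((k+1)*d) * (χC p (-1)) ^ w * ((legendreSym p (-(m : ℤ))) : ℂ) := by
          rw [hpw2]; field_simp
  -- Case 4 : h = v + 1, even
  · intro heq heven
    subst heq
    obtain ⟨k, hk'⟩ := heven
    have hk : v + 1 = 2 * k := by omega
    rw [Heven k hk]
    rw [U0_eq p hpodd v m hm]
    have hx : (1 - (d : ℝ) / 2) * (v : ℝ) - (d : ℝ) / 2
        = (((v : ℤ) - ((k * d : ℕ) : ℤ) : ℤ) : ℝ) := by
      have hvr : (v : ℝ) = 2 * (k : ℝ) - 1 := by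
        have : ((v : ℕ) : ℝ) + 1 = 2 * (k : ℝ) := by exact_mod_cast congrArg (Nat.cast : ℕ → ℝ) hk
        linarith
      push_cast
      rw [hvr]
      ring
    rw [hx, Real.rpow_intCast, Complex.ofReal_zpow]
    rw [zpow_sub₀ (by exact_mod_cast hpC), zpow_natCast, zpow_natCast]
    push_cast
    have hpw2 : ((p:ℂ)) ^ (k * d) ≠ 0 := pow_ne_zero _ hpC
    field_simp
  -- Case 5 : h > v + 1
  · intro hgt
    rcases Nat.even_or_odd h with heven | hodd
    · obtain ⟨k, hk'⟩ := heven
      have hk : h = 2 * k := by omega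
      rw [Heven k hk]
      have hU0 := U_gt p hpodd v m hm h (by omega) (fun _ => (1:ℂ)) (fun b M c _ => rfl)
      simp only [one_mul] at hU0
      rw [hU0]
      ring
    · obtain ⟨k, hk⟩ := hodd
      rw [Hodd k hk]
      have hU := U_gt p hpodd v m hm h (by omega)
        (fun a => ((legendreSym p (a : ℤ)) : ℂ))
        (fun b M c hM => by
          beta_reduce
          rw [legendre_shift p b M c hM])
      rw [hU]
      ring
end

section
/- Let d ≥ 3 be an integer and p an odd prime. Then there exists a constant C₀ > 0 such that for every natural number n ≥ 1, the quantity p^{d−2} · δ_{p,d}(p²n) − δ_{p,d}(n) is a real number and p^{d−2} · δ_{p,d}(p²n) − δ_{p,d}(n) ≥ C₀. -/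
open Complex Real Finset

/-- The `p`-adic local density `δ_{p,d}(n) = Σ_{h=0}^∞ A_d(p^h, n)` (for odd `p`
only finitely many terms are nonzero). -/
noncomputable def localDensity (p d n : ℕ) : ℂ := ∑' h : ℕ, Acoef d (p ^ h) n

/-!
For odd `p` and `p ∤ a` the Gauss sums satisfy `S(p^{h+2}, a) = p S(p^h, a)`, so `S(p^h, a)` only
depends on `a mod p`. Splitting `a = b + p^k c` in the sum defining `A_d(p^h, n)` then shows that
`A_d(p^h, n) = 0` once `p^{h-1} ∤ n` (so `δ_{p,d}(n)` is a finite sum) and that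
`p^{d-2} A_d(p^{h+2}, p²n) = A_d(p^h, n)` for `h ≥ 1`. The difference therefore collapses to
`p^{d-2} (1 + A_d(p, p²n) + A_d(p², p²n)) - 1 = p^{d-2} (1 + A_d(p, p²n)) - 1/p`.
At level `p`, `S(p, a) = (a/p) g` with `g² = (-1/p) p`, so `p^d A_d(p, p²n)` is `0` for odd `d`
and `(p - 1) (±p)^{d/2}` for even `d`: an integer of absolute value at most `p^{d-1}`. Hence the
difference is real and at least `(p - 1) p^{d-3} - 1/p ≥ 1`.
-/

section FiniteField

variable {F R : Type*} [Field F] [Fintype F] [DecidableEq F] [CommRing R] [IsDomain R]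

lemma sum_addChar_mul_sq_eq_quadraticChar_mul_gaussSum (hF : ringChar F ≠ 2)
    {ψ : AddChar F R} (hψ : ψ.IsPrimitive) {a : F} (ha : a ≠ 0) :
    ∑ x, ψ (a * x ^ 2)
      = quadraticChar F a * gaussSum ((quadraticChar F).ringHomComp (Int.castRingHom R)) ψ := by
  set χ := (quadraticChar F).ringHomComp (Int.castRingHom R)
  have hfiber : ∑ x, ψ (a * x ^ 2) = ∑ y, (quadraticChar F y + 1 : ℤ) • ψ (a * y) := by
    rw [← Finset.sum_fiberwise Finset.univ (fun x : F => x ^ 2) (fun x => ψ (a * x ^ 2))]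
    refine Finset.sum_congr rfl fun y _ => ?_
    rw [← quadraticChar_card_sqrts hF y, Set.toFinset_ofPred, natCast_zsmul,
      Finset.sum_congr rfl fun x hx => by rw [(Finset.mem_filter.mp hx).2], Finset.sum_const]
  have hshift : gaussSum χ (ψ.mulShift a) = ∑ y, (quadraticChar F y : R) * ψ (a * y) := by
    simp [gaussSum, χ, AddChar.mulShift_apply]
  have hsum : ∑ y, ψ (a * y) = 0 := by
    simp_rw [mul_comm a]
    rw [AddChar.sum_mulShift a hψ, if_neg ha, Nat.cast_zero]
  rw [hfiber]
  simp only [zsmul_eq_mul, Int.cast_add, Int.cast_one, add_mul, one_mul, Finset.sum_add_distrib,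
    hsum, add_zero, ← hshift]
  have := gaussSum_mulShift_eq χ ψ (Units.mk0 a ha)
  rwa [((quadraticChar_isQuadratic F).comp _).inv] at this

lemma sum_pow_sum_addChar_mul_sq [CharZero R] (hF : ringChar F ≠ 2) {ψ : AddChar F R}
    (hψ : ψ.IsPrimitive) (d : ℕ) :
    ∑ a ∈ univ.filter (· ≠ 0), (∑ x, ψ (a * x ^ 2)) ^ d
      = if Even d then
          ((Fintype.card F : R) - 1) * (quadraticChar F (-1) * Fintype.card F) ^ (d / 2)
        else 0 := by
  set χ := (quadraticChar F).ringHomComp (Int.castRingHom R)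
  set g := gaussSum χ ψ
  have hg : g ^ 2 = quadraticChar F (-1) * Fintype.card F :=
    gaussSum_sq ((MulChar.ringHomComp_ne_one_iff (RingHom.injective_int _)).mpr
      (quadraticChar_ne_one hF)) ((quadraticChar_isQuadratic F).comp _) hψ
  have hsq {a : F} (ha : a ≠ 0) : (quadraticChar F a : R) ^ 2 = 1 := by
    rw [← Int.cast_pow, quadraticChar_sq_one ha, Int.cast_one]
  rw [Finset.sum_congr rfl fun a ha => by
    rw [sum_addChar_mul_sq_eq_quadraticChar_mul_gaussSum hF hψ (Finset.mem_filter.mp ha).2]]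
  obtain ⟨e, rfl | rfl⟩ := Nat.even_or_odd' d
  · have hterm : ∀ a ∈ univ.filter (· ≠ (0 : F)), ((quadraticChar F a : R) * g) ^ (2 * e)
        = (quadraticChar F (-1) * Fintype.card F) ^ e := fun a ha => by
      rw [pow_mul, mul_pow, hsq (Finset.mem_filter.mp ha).2, one_mul, hg]
    rw [Finset.sum_congr rfl hterm, Finset.sum_const, if_pos (even_two_mul e),
      Nat.mul_div_cancel_left e two_pos, nsmul_eq_mul, Finset.filter_ne', Finset.card_erase_of_mem
      (Finset.mem_univ _), Finset.card_univ, Nat.cast_sub Fintype.card_pos, Nat.cast_one]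
  · have hterm : ∀ a ∈ univ.filter (· ≠ (0 : F)),
        ((quadraticChar F a : R) * g) ^ (2 * e + 1) = (g ^ 2) ^ e * g * quadraticChar F a :=
      fun a ha => by
      rw [mul_pow, pow_succ, pow_mul, hsq (Finset.mem_filter.mp ha).2, one_pow, pow_succ g,
        pow_mul]
      ring
    rw [Finset.sum_congr rfl hterm, ← Finset.mul_sum,
      if_neg (Nat.not_even_iff_odd.mpr (odd_two_mul_add_one e)),
      Finset.sum_filter_of_ne fun a _ h => by rintro rfl; simp at h,
      ← Int.cast_sum, quadraticChar_sum_zero hF, Int.cast_zero, mul_zero]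

end FiniteField

namespace LocalDensity

noncomputable def expFrac (q : ℕ) (m : ℤ) : ℂ := exp (2 * π * I * m / q)

lemma expFrac_add (q : ℕ) (m m' : ℤ) : expFrac q (m + m') = expFrac q m * expFrac q m' := by
  rw [expFrac, expFrac, expFrac, ← Complex.exp_add, Int.cast_add, mul_add, add_div]

lemma expFrac_eq_one_of_dvd {q : ℕ} {m : ℤ} (h : (q : ℤ) ∣ m) : expFrac q m = 1 := by
  obtain ⟨k, rfl⟩ := h
  rcases eq_or_ne q 0 with rfl | hq
  · simp [expFrac]
  · rw [expFrac, ← Complex.exp_int_mul_two_pi_mul_I k]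
    congr 1
    push_cast
    field_simp

lemma expFrac_add_mul_self (q : ℕ) (m k : ℤ) : expFrac q (m + q * k) = expFrac q m := by
  rw [expFrac_add, expFrac_eq_one_of_dvd (dvd_mul_right _ _), mul_one]

lemma expFrac_mul_mul_left {r : ℕ} (hr : r ≠ 0) (q : ℕ) (m : ℤ) :
    expFrac (r * q) (r * m) = expFrac q m := by
  rw [expFrac, expFrac]
  congr 1
  push_cast
  field_simp

lemma expFrac_eq_stdAddChar (q : ℕ) [NeZero q] (m : ℤ) :
    expFrac q m = ZMod.stdAddChar (m : ZMod q) :=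
  (ZMod.stdAddChar_coe m).symm

lemma sum_range_zmod (q : ℕ) [NeZero q] (f : ZMod q → ℂ) :
    ∑ t ∈ range q, f t = ∑ x : ZMod q, f x :=
  Finset.sum_nbij' (↑) ZMod.val (by simp) (fun x _ => by simpa using ZMod.val_lt x)
    (fun t ht => ZMod.val_cast_of_lt (mem_range.mp ht)) (fun x _ => ZMod.natCast_zmod_val x)
    (fun _ _ => rfl)

lemma sum_range_filter_not_dvd_zmod {p : ℕ} [NeZero p] (f : ZMod p → ℂ) :
    ∑ a ∈ (range p).filter (¬ p ∣ ·), f a = ∑ x ∈ univ.filter (· ≠ 0), f x := by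
  rw [Finset.sum_filter, Finset.sum_filter,
    ← sum_range_zmod p (fun x => if x ≠ 0 then f x else 0)]
  simp only [ne_eq, ZMod.natCast_eq_zero_iff]

lemma sum_range_expFrac_mul {q : ℕ} (hq : q ≠ 0) (m : ℤ) :
    ∑ t ∈ range q, expFrac q (m * t) = if (q : ℤ) ∣ m then (q : ℂ) else 0 := by
  have : NeZero q := ⟨hq⟩
  calc ∑ t ∈ range q, expFrac q (m * t)
      = ∑ x : ZMod q, ZMod.stdAddChar (x * (m : ZMod q)) := by
        rw [← sum_range_zmod]
        refine Finset.sum_congr rfl fun t _ => ?_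
        rw [expFrac_eq_stdAddChar, mul_comm]
        push_cast
        rfl
    _ = if (q : ℤ) ∣ m then (q : ℂ) else 0 := by
        simp_rw [AddChar.sum_mulShift _ (ZMod.isPrimitive_stdAddChar q), ZMod.card,
          ZMod.intCast_zmod_eq_zero_iff_dvd]
        split_ifs <;> simp

lemma sum_range_mul (M K : ℕ) (f : ℕ → ℂ) :
    ∑ a ∈ range (M * K), f a = ∑ c ∈ range K, ∑ b ∈ range M, f (b + M * c) := by
  induction K with
  | zero => simp
  | succ k ih =>
    rw [Nat.mul_succ, Finset.sum_range_add, ih, Finset.sum_range_succ]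
    simp only [add_comm]

lemma sum_range_mul_ite_dvd {p : ℕ} (hp : 0 < p) (K : ℕ) (f : ℕ → ℂ) :
    ∑ u ∈ range (p * K), (if p ∣ u then f u else 0) = ∑ w ∈ range K, f (p * w) := by
  rw [sum_range_mul]
  refine Finset.sum_congr rfl fun w _ => ?_
  rw [Finset.sum_eq_single_of_mem 0 (mem_range.mpr hp)]
  · simp
  · intro b hb hb0
    rw [if_neg]
    rw [Nat.dvd_add_left (dvd_mul_right p w)]
    exact fun h => hb0 (Nat.eq_zero_of_dvd_of_lt h (mem_range.mp hb))

lemma sum_range_mul_filter_not_dvd_expFrac {p M : ℕ} (hM : M ≠ 0) (hpM : p ∣ M) (K : ℕ)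
    {F : ℕ → ℂ} (hF : ∀ b c, ¬ p ∣ b → F (b + M * c) = F b) (m : ℤ) :
    ∑ a ∈ (range (M * K)).filter (¬ p ∣ ·), F a * expFrac (M * K) (m * a)
      = (∑ b ∈ (range M).filter (¬ p ∣ ·), F b * expFrac (M * K) (m * b))
        * ∑ c ∈ range K, expFrac K (m * c) := by
  rw [Finset.sum_filter, sum_range_mul, Finset.sum_filter, Finset.sum_mul]
  simp_rw [Finset.mul_sum]
  rw [Finset.sum_comm]
  refine Finset.sum_congr rfl fun b _ => Finset.sum_congr rfl fun c _ => ?_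
  simp only [Nat.dvd_add_left (hpM.mul_right c)]
  split_ifs with hb
  · simp
  · rw [hF b c hb, mul_assoc, ← expFrac_mul_mul_left hM K, ← expFrac_add]
    push_cast
    ring_nf

/-- With `t = u + N s`, the cross term `2 a u N s` turns the sum over `s` into a character sum that
vanishes unless `p ∣ u`. -/
lemma sum_range_mul_prime_expFrac_sq {p N a : ℕ} (hp : p.Prime) (hpodd : Odd p) (ha : ¬ p ∣ a)
    (hN : N ≠ 0) (hpN : p ∣ N) :
    ∑ t ∈ range (N * p), expFrac (N * p) (a * t ^ 2)
      = p * ∑ u ∈ range N, if p ∣ u then expFrac (N * p) (a * u ^ 2) else 0 := by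
  obtain ⟨k, rfl⟩ := hpN
  have hcop : p.Coprime (2 * a) :=
    (Nat.coprime_two_right.mpr hpodd).mul_right ((hp.coprime_iff_not_dvd).mpr ha)
  calc ∑ t ∈ range (p * k * p), expFrac (p * k * p) (a * t ^ 2)
      = ∑ s ∈ range p, ∑ u ∈ range (p * k),
          expFrac (p * k * p) (a * u ^ 2) * expFrac p (2 * a * u * s) := by
        rw [sum_range_mul]
        refine Finset.sum_congr rfl fun s _ => Finset.sum_congr rfl fun u _ => ?_
        have : (a : ℤ) * ((u + p * k * s : ℕ) : ℤ) ^ 2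
            = a * u ^ 2 + (p * k : ℕ) * (2 * a * u * s)
              + (p * k * p : ℕ) * (a * k * s ^ 2) := by
          push_cast
          ring
        rw [this, expFrac_add_mul_self, expFrac_add, expFrac_mul_mul_left hN]
    _ = ∑ u ∈ range (p * k),
          expFrac (p * k * p) (a * u ^ 2) * ∑ s ∈ range p, expFrac p (2 * a * u * s) := by
        rw [Finset.sum_comm]
        simp only [Finset.mul_sum]
    _ = p * ∑ u ∈ range (p * k), if p ∣ u then expFrac (p * k * p) (a * u ^ 2) else 0 := by
        rw [Finset.mul_sum]
        refine Finset.sum_congr rfl fun u _ => ?_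
        have : ((p : ℤ) ∣ 2 * a * u) ↔ p ∣ u := by
          exact_mod_cast hcop.dvd_mul_left
        rw [sum_range_expFrac_mul hp.ne_zero]
        simp only [this]
        split_ifs <;> ring

lemma gaussSumS_eq_sum_range (q a : ℕ) :
    gaussSumS q a = ∑ t ∈ range q, expFrac q (a * t ^ 2) := by
  set g : ℕ → ℂ := fun t => expFrac q (a * t ^ 2)
  have hshift : ∑ t ∈ range q, g (t + 1) = ∑ t ∈ range q, g t := by
    have hq : g q = g 0 := by
      rw [show g q = 1 from expFrac_eq_one_of_dvd ⟨a * q, by ring⟩]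
      simp [g, expFrac]
    have := (Finset.sum_range_succ' g q).symm.trans (Finset.sum_range_succ g q)
    rwa [hq, add_left_inj] at this
  rw [gaussSumS, ← Finset.Ico_add_one_right_eq_Icc, Finset.sum_Ico_eq_sum_range,
    Nat.add_sub_cancel, ← hshift]
  refine Finset.sum_congr rfl fun t _ => ?_
  simp only [g, expFrac]
  push_cast
  ring_nf

lemma gaussSumS_eq_sum_zmod (q : ℕ) [NeZero q] (a : ℕ) :
    gaussSumS q a = ∑ x : ZMod q, ZMod.stdAddChar ((a : ZMod q) * x ^ 2) := by
  rw [gaussSumS_eq_sum_range, ← sum_range_zmod]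
  refine Finset.sum_congr rfl fun t _ => ?_
  rw [expFrac_eq_stdAddChar]
  push_cast
  rfl

lemma gaussSumS_one (a : ℕ) : gaussSumS 1 a = 1 := by
  simp [gaussSumS_eq_sum_range, expFrac_eq_one_of_dvd (one_dvd _)]

lemma gaussSumS_add_mul_self (q a c : ℕ) : gaussSumS q (a + q * c) = gaussSumS q a := by
  simp only [gaussSumS_eq_sum_range]
  refine Finset.sum_congr rfl fun t _ => ?_
  rw [← expFrac_add_mul_self q (a * t ^ 2) (c * t ^ 2)]
  push_cast
  ring_nf

lemma gaussSumS_prime_pow_add_two {p : ℕ} (hp : p.Prime) (hpodd : Odd p) (h : ℕ) {a : ℕ}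
    (ha : ¬ p ∣ a) : gaussSumS (p ^ (h + 2)) a = p * gaussSumS (p ^ h) a := by
  rw [gaussSumS_eq_sum_range, gaussSumS_eq_sum_range, pow_succ p (h + 1),
    sum_range_mul_prime_expFrac_sq hp hpodd ha (pow_ne_zero _ hp.ne_zero)
      (dvd_pow_self p h.succ_ne_zero), pow_succ', sum_range_mul_ite_dvd hp.pos]
  congr 1
  refine Finset.sum_congr rfl fun w _ => ?_
  have : (a : ℤ) * ((p * w : ℕ) : ℤ) ^ 2 = (p ^ 2 : ℕ) * (a * w ^ 2) := by
    push_cast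
    ring
  rw [this, show p * p ^ h * p = p ^ 2 * p ^ h by ring,
    expFrac_mul_mul_left (pow_ne_zero 2 hp.ne_zero)]

lemma gaussSumS_prime_pow_add_mul {p : ℕ} (hp : p.Prime) (hpodd : Odd p) :
    ∀ (h : ℕ) {b : ℕ} (c : ℕ), ¬ p ∣ b →
      gaussSumS (p ^ h) (b + p * c) = gaussSumS (p ^ h) b
  | 0, b, c, _ => by simp [gaussSumS_one]
  | 1, b, c, _ => by rw [pow_one, gaussSumS_add_mul_self]
  | h + 2, b, c, hb => by
    have hbc : ¬ p ∣ b + p * c := by rwa [Nat.dvd_add_left (dvd_mul_right p c)]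
    rw [gaussSumS_prime_pow_add_two hp hpodd h hbc, gaussSumS_prime_pow_add_two hp hpodd h hb,
      gaussSumS_prime_pow_add_mul hp hpodd h c hb]

lemma Acoef_one (d n : ℕ) : Acoef d 1 n = 1 := by
  rw [Acoef, show (Icc 1 1).filter (fun a => Nat.gcd a 1 = 1) = {1} by decide, sum_singleton,
    gaussSumS_one]
  have : -(2 * π * I) * (n : ℂ) * ((1 : ℕ) : ℂ) / ((1 : ℕ) : ℂ)
      = (-n : ℤ) * (2 * π * I) := by
    push_cast
    ring
  rw [this, Complex.exp_int_mul_two_pi_mul_I]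
  simp

lemma Acoef_prime_pow {p : ℕ} (hp : p.Prime) (d n : ℕ) {h : ℕ} (hh : h ≠ 0) :
    Acoef d (p ^ h) n = ∑ a ∈ (range (p ^ h)).filter (¬ p ∣ ·),
      (((p : ℂ) ^ h)⁻¹ * gaussSumS (p ^ h) a) ^ d * expFrac (p ^ h) (-n * a) := by
  have hcop (a : ℕ) : Nat.gcd a (p ^ h) = 1 ↔ ¬ p ∣ a := by
    rw [← Nat.Coprime, Nat.coprime_pow_right_iff (Nat.pos_of_ne_zero hh), Nat.coprime_comm,
      hp.coprime_iff_not_dvd]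
  rw [Acoef]
  refine Finset.sum_congr ?_ fun a _ => ?_
  · ext a
    simp only [Finset.mem_filter, Finset.mem_Icc, Finset.mem_range, hcop]
    have hpa : p ∣ p ^ h := dvd_pow_self p hh
    constructor
    · rintro ⟨⟨-, ha⟩, hpa'⟩
      exact ⟨lt_of_le_of_ne ha (by rintro rfl; exact hpa' hpa), hpa'⟩
    · rintro ⟨ha, hpa'⟩
      exact ⟨⟨Nat.pos_of_ne_zero (by rintro rfl; exact hpa' (dvd_zero p)), ha.le⟩, hpa'⟩
  · simp only [expFrac]
    push_cast
    ring_nf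

lemma Acoef_prime_pow_eq_zero {p : ℕ} (hp : p.Prime) (hpodd : Odd p) (d : ℕ) {n h : ℕ}
    (hn : ¬ p ^ (h + 1) ∣ n) : Acoef d (p ^ (h + 2)) n = 0 := by
  have hsplit : p ^ (h + 2) = p * p ^ (h + 1) := pow_succ' p (h + 1)
  rw [Acoef_prime_pow hp d n (h := h + 2) (by omega), hsplit,
    sum_range_mul_filter_not_dvd_expFrac hp.ne_zero dvd_rfl _ (fun b c hb => ?_),
    sum_range_expFrac_mul (pow_ne_zero _ hp.ne_zero), if_neg, mul_zero]
  · rwa [Int.dvd_neg, Int.natCast_dvd_natCast]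
  · rw [← hsplit, gaussSumS_prime_pow_add_mul hp hpodd _ c hb]

lemma pow_mul_Acoef_prime_pow_add_three {p : ℕ} (hp : p.Prime) (hpodd : Odd p) (d n h : ℕ) :
    (p : ℂ) ^ d * Acoef d (p ^ (h + 3)) (p ^ 2 * n) = p ^ 2 * Acoef d (p ^ (h + 1)) n := by
  have hp0 : (p : ℂ) ≠ 0 := Nat.cast_ne_zero.mpr hp.ne_zero
  have hsplit : p ^ (h + 3) = p ^ (h + 1) * p ^ 2 := by ring
  rw [Acoef_prime_pow hp d _ (h := h + 3) (by omega),
    Acoef_prime_pow hp d n (h := h + 1) (by omega), hsplit,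
    sum_range_mul_filter_not_dvd_expFrac (pow_ne_zero _ hp.ne_zero)
      (dvd_pow_self p h.succ_ne_zero) _ (fun b c hb => ?_),
    sum_range_expFrac_mul (pow_ne_zero _ hp.ne_zero), if_pos ⟨-n, by push_cast; ring⟩,
    Finset.sum_mul, Finset.mul_sum, Finset.mul_sum]
  · refine Finset.sum_congr rfl fun b hb => ?_
    have hG : gaussSumS (p ^ (h + 1) * p ^ 2) b = p * gaussSumS (p ^ (h + 1)) b := by
      rw [← hsplit, gaussSumS_prime_pow_add_two hp hpodd _ (Finset.mem_filter.mp hb).2]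
    have hE : expFrac (p ^ (h + 1) * p ^ 2) (-((p ^ 2 * n : ℕ) : ℤ) * b)
        = expFrac (p ^ (h + 1)) (-n * b) := by
      have : -((p ^ 2 * n : ℕ) : ℤ) * b = (p ^ 2 : ℕ) * (-n * b) := by
        push_cast
        ring
      rw [this, mul_comm (p ^ (h + 1)), expFrac_mul_mul_left (pow_ne_zero 2 hp.ne_zero)]
    have hscale : (p : ℂ) ^ d * (((p : ℂ) ^ (h + 3))⁻¹ * (p * gaussSumS (p ^ (h + 1)) b)) ^ d
        = (((p : ℂ) ^ (h + 1))⁻¹ * gaussSumS (p ^ (h + 1)) b) ^ d := by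
      rw [← mul_pow]
      congr 1
      field_simp
      ring
    rw [hG, hE, Nat.cast_pow]
    linear_combination (expFrac (p ^ (h + 1)) (-n * b) * p ^ 2) * hscale
  · rw [← hsplit, show p ^ (h + 1) * c = p * (p ^ h * c) by ring,
      gaussSumS_prime_pow_add_mul hp hpodd _ _ hb]

lemma card_filter_not_dvd_range_prime_sq {p : ℕ} (hp : p.Prime) :
    ((range (p ^ 2)).filter (¬ p ∣ ·)).card = p * (p - 1) := by
  have hcop (a : ℕ) : (p ^ 2).Coprime a ↔ ¬ p ∣ a := by
    rw [Nat.coprime_pow_left_iff two_pos, hp.coprime_iff_not_dvd]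
  rw [← Finset.filter_congr fun a _ => hcop a, ← Nat.totient_eq_card_coprime,
    Nat.totient_prime_pow hp two_pos]
  norm_num

lemma pow_mul_Acoef_prime_sq {p : ℕ} (hp : p.Prime) (hpodd : Odd p) (d n : ℕ) :
    (p : ℂ) ^ d * Acoef d (p ^ 2) (p ^ 2 * n) = p ^ 2 - p := by
  have hp0 : (p : ℂ) ≠ 0 := Nat.cast_ne_zero.mpr hp.ne_zero
  have hterm : ∀ a ∈ (range (p ^ 2)).filter (¬ p ∣ ·),
      (p : ℂ) ^ d * ((((p : ℂ) ^ 2)⁻¹ * gaussSumS (p ^ 2) a) ^ d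
        * expFrac (p ^ 2) (-((p ^ 2 * n : ℕ) : ℤ) * a)) = 1 := by
    intro a ha
    have hunit : (p : ℂ) * (((p : ℂ) ^ 2)⁻¹ * (p * 1)) = 1 := by field_simp
    rw [gaussSumS_prime_pow_add_two hp hpodd 0 (Finset.mem_filter.mp ha).2, pow_zero,
      gaussSumS_one, expFrac_eq_one_of_dvd ⟨-(n * a), by push_cast; ring⟩, mul_one, ← mul_pow,
      hunit, one_pow]
  rw [Acoef_prime_pow hp d _ two_ne_zero, Finset.mul_sum, Finset.sum_congr rfl hterm,
    Finset.sum_const, card_filter_not_dvd_range_prime_sq hp, nsmul_eq_mul, mul_one,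
    Nat.cast_mul, Nat.cast_sub hp.one_le]
  push_cast
  ring

lemma pow_mul_Acoef_prime_of_dvd {p : ℕ} [Fact p.Prime] (hpodd : Odd p) (d : ℕ) {m : ℕ}
    (hm : p ∣ m) :
    (p : ℂ) ^ d * Acoef d p m
      = if Even d then ((p : ℂ) - 1) * (quadraticChar (ZMod p) (-1) * p) ^ (d / 2) else 0 := by
  have hp : p.Prime := Fact.out
  have hp0 : (p : ℂ) ≠ 0 := Nat.cast_ne_zero.mpr hp.ne_zero
  have hchar : ringChar (ZMod p) ≠ 2 := by
    rw [ZMod.ringChar_zmod_n]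
    exact hpodd.ne_two_of_dvd_nat dvd_rfl
  have hA := Acoef_prime_pow hp d m one_ne_zero
  simp only [pow_one] at hA
  have hterm : ∀ a ∈ (range p).filter (¬ p ∣ ·),
      (p : ℂ) ^ d * (((p : ℂ)⁻¹ * gaussSumS p a) ^ d * expFrac p (-m * a))
        = (∑ x : ZMod p, ZMod.stdAddChar ((a : ZMod p) * x ^ 2)) ^ d := by
    intro a _
    obtain ⟨k, rfl⟩ := hm
    rw [expFrac_eq_one_of_dvd ⟨-(k * a), by push_cast; ring⟩, mul_one, ← mul_pow,
      mul_inv_cancel_left₀ hp0, gaussSumS_eq_sum_zmod]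
  rw [hA, Finset.mul_sum, Finset.sum_congr rfl hterm,
    sum_range_filter_not_dvd_zmod (fun a => (∑ x : ZMod p, ZMod.stdAddChar (a * x ^ 2)) ^ d),
    sum_pow_sum_addChar_mul_sq hchar (ZMod.isPrimitive_stdAddChar p), ZMod.card]

lemma exists_intCast_eq_pow_mul_Acoef_prime {p : ℕ} [Fact p.Prime] (hpodd : Odd p) {d : ℕ}
    (hd : 3 ≤ d) {m : ℕ} (hm : p ∣ m) :
    ∃ v : ℤ, (p : ℂ) ^ d * Acoef d p m = v ∧ |v| ≤ (p : ℤ) ^ (d - 1) := by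
  have hp : p.Prime := Fact.out
  rw [pow_mul_Acoef_prime_of_dvd hpodd d hm]
  split_ifs with hev
  · obtain ⟨e, rfl⟩ := hev
    set ε := quadraticChar (ZMod p) (-1)
    have hε : |ε| = 1 := by
      rcases quadraticChar_dichotomy (neg_ne_zero.mpr (one_ne_zero (α := ZMod p))) with h | h <;>
        simp [ε, h]
    refine ⟨(p - 1) * (ε * p) ^ e, by push_cast; rw [show (e + e) / 2 = e by omega], ?_⟩
    have hp1 : (0 : ℤ) ≤ p - 1 := by linarith [hp.one_le]
    rw [abs_mul, abs_pow, abs_mul, hε, one_mul, Nat.abs_cast, abs_of_nonneg hp1]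
    calc ((p : ℤ) - 1) * p ^ e ≤ p * p ^ e := by gcongr; linarith
      _ = p ^ (e + 1) := by ring
      _ ≤ p ^ (e + e - 1) := pow_le_pow_right₀ (by exact_mod_cast hp.one_le) (by omega)
  · exact ⟨0, by simp, by simp⟩

lemma localDensity_eq_sum_range {p : ℕ} (hp : p.Prime) (hpodd : Odd p) (d : ℕ) {n N : ℕ}
    (hN : ¬ p ^ (N + 1) ∣ n) :
    localDensity p d n = ∑ h ∈ range (N + 2), Acoef d (p ^ h) n := by
  refine tsum_eq_sum fun h hh => ?_
  obtain ⟨k, rfl⟩ : ∃ k, h = k + 2 := ⟨h - 2, by simp at hh; omega⟩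
  refine Acoef_prime_pow_eq_zero hp hpodd d fun hk => hN ((pow_dvd_pow p ?_).trans hk)
  simp at hh
  omega

lemma localDensity_sq_mul_sub {p : ℕ} (hp : p.Prime) (hpodd : Odd p) {d : ℕ} (hd : 2 ≤ d)
    {n : ℕ} (hn : n ≠ 0) :
    (p : ℂ) ^ (d - 2) * localDensity p d (p ^ 2 * n) - localDensity p d n
      = p ^ (d - 2) * (1 + Acoef d p (p ^ 2 * n)) - (p : ℂ)⁻¹ := by
  have hp0 : (p : ℂ) ≠ 0 := Nat.cast_ne_zero.mpr hp.ne_zero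
  have hpd : (p : ℂ) ^ d = p ^ 2 * p ^ (d - 2) := by rw [← pow_add, Nat.add_sub_cancel' hd]
  set N := padicValNat p n
  have hN : ¬ p ^ (N + 1) ∣ n := by
    rw [padicValNat_dvd_iff_le_of_ne_one hp.ne_one hn]
    omega
  have hN2 : ¬ p ^ (N + 3) ∣ p ^ 2 * n := by
    rwa [show N + 3 = 2 + (N + 1) by ring, pow_add, Nat.mul_dvd_mul_iff_left (pow_pos hp.pos 2)]
  have hscale (j : ℕ) : (p : ℂ) ^ (d - 2) * Acoef d (p ^ (j + 3)) (p ^ 2 * n)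
      = Acoef d (p ^ (j + 1)) n := by
    refine mul_left_cancel₀ (pow_ne_zero 2 hp0) ?_
    rw [← mul_assoc, ← hpd, pow_mul_Acoef_prime_pow_add_three hp hpodd]
  have hsq : (p : ℂ) ^ (d - 2) * Acoef d (p ^ 2) (p ^ 2 * n) = 1 - (p : ℂ)⁻¹ := by
    refine mul_left_cancel₀ (pow_ne_zero 2 hp0) ?_
    rw [← mul_assoc, ← hpd, pow_mul_Acoef_prime_sq hp hpodd]
    field_simp
  rw [localDensity_eq_sum_range hp hpodd d hN2, localDensity_eq_sum_range hp hpodd d hN]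
  simp only [Finset.sum_range_succ' _ (N + 1), Finset.sum_range_succ' _ (N + 2),
    Finset.sum_range_succ' _ (N + 3), add_assoc, Nat.reduceAdd]
  simp only [Finset.mul_sum, mul_add, hscale, hsq, pow_zero, pow_one, Acoef_one]
  ring

lemma one_le_pow_add_div_sq_sub_inv {P v : ℝ} (hP : 3 ≤ P) {k : ℕ}
    (hv : |v| ≤ P ^ (k + 2)) :
    1 ≤ P ^ (k + 1) + v / P ^ 2 - P⁻¹ := by
  have hP0 : 0 < P := by linarith
  have hv' : -P ^ k ≤ v / P ^ 2 := by
    rw [le_div_iff₀ (by positivity), neg_mul, ← pow_add]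
    linarith [neg_abs_le v]
  have hPk : 1 ≤ P ^ k := one_le_pow₀ (by linarith)
  have hinv : P⁻¹ ≤ 1 := inv_le_one_of_one_le₀ (by linarith)
  have : P ^ (k + 1) = P * P ^ k := pow_succ' P k
  nlinarith

end LocalDensity

/-- For `d ≥ 3` and `p` an odd prime, `p^{d-2} δ_{p,d}(p²n) - δ_{p,d}(n)` is a real
number bounded below by a positive constant uniformly in `n ≥ 1`. -/
theorem localDensity_difference_lower_bound (d p : ℕ) (hd : 3 ≤ d)
    (hp : p.Prime) (hpodd : Odd p) :
    ∃ C₀ : ℝ, 0 < C₀ ∧ ∀ n : ℕ, 1 ≤ n →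
      ((p : ℂ) ^ (d - 2) * localDensity p d (p ^ 2 * n) - localDensity p d n).im = 0 ∧
      C₀ ≤ ((p : ℂ) ^ (d - 2) * localDensity p d (p ^ 2 * n) - localDensity p d n).re := by
  have : Fact p.Prime := ⟨hp⟩
  have hp0 : (p : ℂ) ≠ 0 := Nat.cast_ne_zero.mpr hp.ne_zero
  have hp3 : (3 : ℝ) ≤ p := by
    obtain ⟨k, rfl⟩ := hpodd
    have := hp.two_le
    norm_cast
    omega
  refine ⟨1, one_pos, fun n hn => ?_⟩
  obtain ⟨v, hv, hvle⟩ := LocalDensity.exists_intCast_eq_pow_mul_Acoef_prime hpodd hd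
    (dvd_mul_of_dvd_left (dvd_pow_self p two_ne_zero) n)
  have hD : (p : ℂ) ^ (d - 2) * localDensity p d (p ^ 2 * n) - localDensity p d n
      = (((p : ℝ) ^ (d - 2) + v / (p : ℝ) ^ 2 - (p : ℝ)⁻¹ : ℝ) : ℂ) := by
    rw [LocalDensity.localDensity_sq_mul_sub hp hpodd (by omega) (by omega),
      eq_div_of_mul_eq (pow_ne_zero d hp0) ((mul_comm _ _).trans hv)]
    obtain ⟨k, rfl⟩ : ∃ k, d = k + 2 := ⟨d - 2, by omega⟩
    push_cast
    field_simp
    ring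
  obtain ⟨k, rfl⟩ : ∃ k, d = k + 3 := ⟨d - 3, by omega⟩
  rw [hD, Complex.ofReal_im, Complex.ofReal_re]
  exact ⟨rfl, LocalDensity.one_le_pow_add_div_sq_sub_inv hp3 (by exact_mod_cast hvle)⟩
end
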